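/- arXiv:2605.10475 — 10 statements merged into one kernel-verified Lean document; each statement's English description precedes it below -/
import Mathlib

section
/- For all p, p', q, q', s, b ∈ [0,1] with p ≤ p' and q' ≤ q, it holds that Rev(p,q,s,b) ≤ Rev(p',q',s,b) + (p' − p) + (q − q') + 𝟙[p < s ≤ p'] + 𝟙[q' ≤ b < q]. -/
/-- Revenue. -/
noncomputable def Rev (p q s b : ℝ) : ℝ := (q - p) * (if s ≤ p ∧ q ≤ b then 1 else 0)

theorem stmt3 (p p' q q' s b : ℝ)
    (hp : p ∈ Set.Icc (0:ℝ) 1) (hp' : p' ∈ Set.Icc (0:ℝ) 1)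
    (hq : q ∈ Set.Icc (0:ℝ) 1) (hq' : q' ∈ Set.Icc (0:ℝ) 1)
    (hs : s ∈ Set.Icc (0:ℝ) 1) (hb : b ∈ Set.Icc (0:ℝ) 1)
    (hpp : p ≤ p') (hqq : q' ≤ q) :
    Rev p q s b ≤ Rev p' q' s b + (p' - p) + (q - q')
      + (if p < s ∧ s ≤ p' then (1:ℝ) else 0)
      + (if q' ≤ b ∧ b < q then (1:ℝ) else 0) := by
  obtain ⟨hp0, hp1⟩ := hp
  obtain ⟨hq0, hq1⟩ := hq
  obtain ⟨hq'0, hq'1⟩ := hq'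
  obtain ⟨hp'0, hp'1⟩ := hp'
  simp only [Rev]
  rcases le_or_gt s p with h1 | h1 <;> rcases le_or_gt q b with h2 | h2 <;>
    rcases le_or_gt s p' with h3 | h3 <;> rcases le_or_gt q' b with h4 | h4 <;>
    split_ifs <;> first | linarith | nlinarith | tauto
end

section
/- Let σ > 0 and let P be a σ-smooth probability measure on [0,1]². Let ε > 0 and let p, p', q, q' ∈ [0,1] satisfy p ≤ p' ≤ p + ε and q − ε ≤ q' ≤ q. Then ∫ GFT(p,q,s,b) dP(s,b) ≤ ∫ GFT(p',q',s,b) dP(s,b) + 2ε/σ. -/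
/-!
Raising the seller's price from `p` to `p'` and lowering the buyer's from `q` to `q'` only
enlarges the set of trading pairs `(s, b)`, and on trades that already happened the gain is
unchanged. So `GFT p q ≤ GFT p' q' + 𝟙_S` on the unit square, where `S` is the union of the
vertical strip `(p, p'] × ℝ` and the horizontal strip `ℝ × [q', q)`: a newly enabled trade has
gain `b - s ≥ -1`. By σ-smoothness each strip, cut down to the square, has mass at most `ε / σ`.
-/

open MeasureTheory Set

/-- Gain from trade. -/
noncomputable def GFT (p q s b : ℝ) : ℝ := (b - s) * (if s ≤ p ∧ q ≤ b then 1 else 0)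

lemma measurable_GFT (p q : ℝ) : Measurable fun x : ℝ × ℝ => GFT p q x.1 x.2 :=
  (measurable_snd.sub measurable_fst).mul <| Measurable.ite
    ((measurableSet_le measurable_fst measurable_const).inter
      (measurableSet_le measurable_const measurable_snd))
    measurable_const measurable_const

lemma abs_GFT_le_one {p q s b : ℝ} (hs : s ∈ Icc (0 : ℝ) 1) (hb : b ∈ Icc (0 : ℝ) 1) :
    |GFT p q s b| ≤ 1 := by
  have hbs : |b - s| ≤ 1 := abs_le.2 ⟨by linarith [hs.2, hb.1], by linarith [hs.1, hb.2]⟩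
  unfold GFT
  split_ifs <;> simp [hbs]

lemma integrable_GFT {P : Measure (ℝ × ℝ)} [IsFiniteMeasure P]
    (hsupp : ∀ᵐ x ∂P, x ∈ Icc (0 : ℝ) 1 ×ˢ Icc (0 : ℝ) 1) (p q : ℝ) :
    Integrable (fun x : ℝ × ℝ => GFT p q x.1 x.2) P :=
  .of_bound (measurable_GFT p q).aestronglyMeasurable 1 <| by
    filter_upwards [hsupp] with x hx using abs_GFT_le_one hx.1 hx.2

def priceStrips (p p' q' q : ℝ) : Set (ℝ × ℝ) := Ioc p p' ×ˢ univ ∪ univ ×ˢ Ico q' q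

lemma measurableSet_priceStrips (p p' q' q : ℝ) : MeasurableSet (priceStrips p p' q' q) :=
  (measurableSet_Ioc.prod .univ).union (MeasurableSet.univ.prod measurableSet_Ico)

lemma GFT_le_GFT_add_indicator_priceStrips {p p' q q' s b : ℝ} (hp : p ≤ p') (hq : q' ≤ q)
    (hsb : s - b ≤ 1) :
    GFT p q s b ≤ GFT p' q' s b + (priceStrips p p' q' q).indicator 1 (s, b) := by
  have hind : 0 ≤ (priceStrips p p' q' q).indicator (1 : ℝ × ℝ → ℝ) (s, b) :=
    indicator_nonneg (fun _ _ => zero_le_one) _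
  unfold GFT
  by_cases hold : s ≤ p ∧ q ≤ b
  · rw [if_pos hold, if_pos ⟨hold.1.trans hp, hq.trans hold.2⟩]
    linarith
  by_cases hnew : s ≤ p' ∧ q' ≤ b
  · have hmem : (s, b) ∈ priceStrips p p' q' q := by
      rcases lt_or_ge p s with hps | hsp
      · exact Or.inl ⟨⟨hps, hnew.1⟩, mem_univ b⟩
      · exact Or.inr ⟨mem_univ s, hnew.2, lt_of_not_ge fun hqb => hold ⟨hsp, hqb⟩⟩
    rw [if_neg hold, if_pos hnew, indicator_of_mem hmem]
    simp only [Pi.one_apply]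
    linarith
  · rw [if_neg hold, if_neg hnew]
    simpa using hind

section Smooth

variable {σ : ℝ} {P : Measure (ℝ × ℝ)}
  (hsupp : P ((Icc (0 : ℝ) 1 ×ˢ Icc (0 : ℝ) 1)ᶜ) = 0)
  (hsmooth : ∀ A : Set (ℝ × ℝ), MeasurableSet A → P A ≤ volume A / ENNReal.ofReal σ)
include hsupp hsmooth

lemma measure_le_volume_inter_unitSquare_div {A : Set (ℝ × ℝ)} (hA : MeasurableSet A) :
    P A ≤ volume (A ∩ Icc (0 : ℝ) 1 ×ˢ Icc (0 : ℝ) 1) / ENNReal.ofReal σ := by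
  rw [← measure_inter_conull hsupp]
  exact hsmooth _ (hA.inter (measurableSet_Icc.prod measurableSet_Icc))

lemma measureReal_Ioc_prod_univ_le (hσ : 0 < σ) {p p' : ℝ} (hp : p ≤ p') :
    P.real (Ioc p p' ×ˢ univ) ≤ (p' - p) / σ := by
  refine ENNReal.toReal_le_of_le_ofReal (div_nonneg (sub_nonneg.2 hp) hσ.le) ?_
  refine (measure_le_volume_inter_unitSquare_div hsupp hsmooth
    (measurableSet_Ioc.prod .univ)).trans ?_
  rw [ENNReal.ofReal_div_of_pos hσ]
  gcongr
  calc volume (Ioc p p' ×ˢ univ ∩ Icc (0 : ℝ) 1 ×ˢ Icc (0 : ℝ) 1)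
      ≤ volume (Ioc p p' ×ˢ Icc (0 : ℝ) 1) := measure_mono fun x hx => ⟨hx.1.1, hx.2.2⟩
    _ = ENNReal.ofReal (p' - p) := by
      simp [Measure.volume_eq_prod, Measure.prod_prod, Real.volume_Ioc, Real.volume_Icc]

lemma measureReal_univ_prod_Ico_le (hσ : 0 < σ) {q' q : ℝ} (hq : q' ≤ q) :
    P.real (univ ×ˢ Ico q' q) ≤ (q - q') / σ := by
  refine ENNReal.toReal_le_of_le_ofReal (div_nonneg (sub_nonneg.2 hq) hσ.le) ?_
  refine (measure_le_volume_inter_unitSquare_div hsupp hsmooth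
    (MeasurableSet.univ.prod measurableSet_Ico)).trans ?_
  rw [ENNReal.ofReal_div_of_pos hσ]
  gcongr
  calc volume (univ ×ˢ Ico q' q ∩ Icc (0 : ℝ) 1 ×ˢ Icc (0 : ℝ) 1)
      ≤ volume (Icc (0 : ℝ) 1 ×ˢ Ico q' q) := measure_mono fun x hx => ⟨hx.2.1, hx.1.2⟩
    _ = ENNReal.ofReal (q - q') := by
      simp [Measure.volume_eq_prod, Measure.prod_prod, Real.volume_Ico, Real.volume_Icc]

lemma measureReal_priceStrips_le (hσ : 0 < σ) {p p' q' q : ℝ} (hp : p ≤ p') (hq : q' ≤ q) :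
    P.real (priceStrips p p' q' q) ≤ ((p' - p) + (q - q')) / σ := by
  rw [add_div]
  exact (measureReal_union_le _ _).trans <| add_le_add
    (measureReal_Ioc_prod_univ_le hsupp hsmooth hσ hp)
    (measureReal_univ_prod_Ico_le hsupp hsmooth hσ hq)

end Smooth

theorem stmt4_general (σ : ℝ) (hσ : 0 < σ) (P : Measure (ℝ × ℝ)) [IsProbabilityMeasure P]
    (hsupp : P ((Set.Icc (0:ℝ) 1 ×ˢ Set.Icc (0:ℝ) 1)ᶜ) = 0)
    (hsmooth : ∀ A : Set (ℝ × ℝ), MeasurableSet A → P A ≤ volume A / ENNReal.ofReal σ)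
    (ε : ℝ) (p p' q q' : ℝ)
    (h1 : p ≤ p') (h2 : p' ≤ p + ε) (h3 : q - ε ≤ q') (h4 : q' ≤ q) :
    ∫ x, GFT p q x.1 x.2 ∂P ≤ (∫ x, GFT p' q' x.1 x.2 ∂P) + 2 * ε / σ := by
  have hsq : ∀ᵐ x ∂P, x ∈ Icc (0 : ℝ) 1 ×ˢ Icc (0 : ℝ) 1 := ae_iff.2 hsupp
  set S := priceStrips p p' q' q
  have hSint : Integrable (S.indicator (1 : ℝ × ℝ → ℝ)) P :=
    (integrable_const 1).indicator (measurableSet_priceStrips p p' q' q)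
  have hpt : ∀ᵐ x ∂P, GFT p q x.1 x.2 ≤ GFT p' q' x.1 x.2 + S.indicator 1 x := by
    filter_upwards [hsq] with x hx
    exact GFT_le_GFT_add_indicator_priceStrips h1 h4 (by linarith [hx.1.2, hx.2.1])
  have hPS : P.real S ≤ 2 * ε / σ :=
    (measureReal_priceStrips_le hsupp hsmooth hσ h1 h4).trans
      (div_le_div_of_nonneg_right (by linarith) hσ.le)
  calc ∫ x, GFT p q x.1 x.2 ∂P
      ≤ ∫ x, (GFT p' q' x.1 x.2 + S.indicator 1 x) ∂P :=
        integral_mono_ae (integrable_GFT hsq p q)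
          ((integrable_GFT hsq p' q').add hSint) hpt
    _ = (∫ x, GFT p' q' x.1 x.2 ∂P) + P.real S := by
      rw [integral_add (integrable_GFT hsq p' q') hSint,
        integral_indicator_one (measurableSet_priceStrips p p' q' q)]
    _ ≤ (∫ x, GFT p' q' x.1 x.2 ∂P) + 2 * ε / σ := by gcongr

theorem stmt4 (σ : ℝ) (hσ : 0 < σ) (P : Measure (ℝ × ℝ)) [IsProbabilityMeasure P]
    (hsupp : P ((Set.Icc (0:ℝ) 1 ×ˢ Set.Icc (0:ℝ) 1)ᶜ) = 0)
    (hsmooth : ∀ A : Set (ℝ × ℝ), MeasurableSet A → P A ≤ volume A / ENNReal.ofReal σ)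
    (ε : ℝ) (hε : 0 < ε) (p p' q q' : ℝ)
    (hp : p ∈ Set.Icc (0:ℝ) 1) (hp' : p' ∈ Set.Icc (0:ℝ) 1)
    (hq : q ∈ Set.Icc (0:ℝ) 1) (hq' : q' ∈ Set.Icc (0:ℝ) 1)
    (h1 : p ≤ p') (h2 : p' ≤ p + ε) (h3 : q - ε ≤ q') (h4 : q' ≤ q) :
    ∫ x, GFT p q x.1 x.2 ∂P ≤ (∫ x, GFT p' q' x.1 x.2 ∂P) + 2 * ε / σ :=
  stmt4_general σ hσ P hsupp hsmooth ε p p' q q' h1 h2 h3 h4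
end

section
/- Let σ > 0 and let P be a σ-smooth probability measure on [0,1]². Let ε > 0 and let p, p', q, q' ∈ [0,1] satisfy p ≤ p' ≤ p + ε and q − ε ≤ q' ≤ q. Then ∫ Rev(p,q,s,b) dP(s,b) ≤ ∫ Rev(p',q',s,b) dP(s,b) + 2ε + 2ε/σ. -/
open MeasureTheory

/-!
Both integrals are (price gap) × (mass of the trade region `Iic p ×ˢ Ici q`). Moving to the wider
prices `p', q'` enlarges the trade region and lowers the gap by at most `2ε`; the new part of the
region lies in two strips of area at most `ε` each, so by smoothness it has mass at most `2ε/σ`,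
and on it the revenue `q' - p' ≥ -1` loses at most that mass.
-/

open Set

def tradeRegion (p q : ℝ) : Set (ℝ × ℝ) := Iic p ×ˢ Ici q

lemma measurableSet_tradeRegion (p q : ℝ) : MeasurableSet (tradeRegion p q) :=
  measurableSet_Iic.prod measurableSet_Ici

lemma tradeRegion_mono {p p' q q' : ℝ} (hp : p ≤ p') (hq : q' ≤ q) :
    tradeRegion p q ⊆ tradeRegion p' q' :=
  prod_mono (Iic_subset_Iic.2 hp) (Ici_subset_Ici.2 hq)

lemma Rev_eq_indicator (p q : ℝ) :
    (fun x : ℝ × ℝ => Rev p q x.1 x.2) = (tradeRegion p q).indicator fun _ => q - p := by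
  ext x
  by_cases h : x.1 ≤ p ∧ q ≤ x.2 <;> simp [Rev, tradeRegion, indicator, h]

lemma integral_Rev (μ : Measure (ℝ × ℝ)) (p q : ℝ) :
    ∫ x, Rev p q x.1 x.2 ∂μ = μ.real (tradeRegion p q) * (q - p) := by
  rw [Rev_eq_indicator, integral_indicator_const _ (measurableSet_tradeRegion p q), smul_eq_mul]

lemma tradeRegion_diff_inter_unitSquare_subset (p p' q q' : ℝ) :
    (tradeRegion p' q' \ tradeRegion p q) ∩ (Icc 0 1 ×ˢ Icc 0 1) ⊆
      Ioc p p' ×ˢ Icc 0 1 ∪ Icc 0 1 ×ˢ Ico q' q := by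
  rintro ⟨s, b⟩ ⟨⟨⟨hs', hb'⟩, hnot⟩, hs, hb⟩
  simp only [tradeRegion, mem_prod, mem_Iic, mem_Ici, not_and_or, not_le] at hs' hb' hnot
  rcases hnot with hps | hbq
  · exact Or.inl ⟨⟨hps, hs'⟩, hb⟩
  · exact Or.inr ⟨hs, hb', hbq⟩

lemma volume_tradeRegion_diff_inter_unitSquare_le (p p' q q' : ℝ) :
    volume ((tradeRegion p' q' \ tradeRegion p q) ∩ (Icc 0 1 ×ˢ Icc 0 1)) ≤
      ENNReal.ofReal (p' - p) + ENNReal.ofReal (q - q') :=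
  calc _ ≤ volume (Ioc p p' ×ˢ Icc (0 : ℝ) 1 ∪ Icc (0 : ℝ) 1 ×ˢ Ico q' q) :=
        measure_mono (tradeRegion_diff_inter_unitSquare_subset p p' q q')
    _ ≤ volume (Ioc p p' ×ˢ Icc (0 : ℝ) 1) + volume (Icc (0 : ℝ) 1 ×ˢ Ico q' q) :=
        measure_union_le _ _
    _ = _ := by
        simp only [Measure.volume_eq_prod, Measure.prod_prod, Real.volume_Ioc, Real.volume_Icc,
          Real.volume_Ico, sub_zero, ENNReal.ofReal_one, mul_one, one_mul]

lemma measure_le_measure_inter_div {α : Type*} [MeasurableSpace α] {μ ν : Measure α}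
    {c : ENNReal} {K S : Set α} (hK : μ Kᶜ = 0) (hμν : ∀ A, MeasurableSet A → μ A ≤ ν A / c)
    (hKm : MeasurableSet K) (hS : MeasurableSet S) :
    μ S ≤ ν (S ∩ K) / c :=
  calc μ S = μ (S ∩ K) := (measure_inter_conull hK).symm
    _ ≤ _ := hμν _ (hS.inter hKm)

lemma measureReal_tradeRegion_diff_le {σ ε : ℝ} (hσ : 0 < σ) (hε : 0 < ε)
    {P : Measure (ℝ × ℝ)} (hsupp : P ((Icc (0:ℝ) 1 ×ˢ Icc (0:ℝ) 1)ᶜ) = 0)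
    (hsmooth : ∀ A : Set (ℝ × ℝ), MeasurableSet A → P A ≤ volume A / ENNReal.ofReal σ)
    {p p' q q' : ℝ} (h1 : p ≤ p') (h2 : p' ≤ p + ε) (h3 : q - ε ≤ q') (h4 : q' ≤ q) :
    P.real (tradeRegion p' q' \ tradeRegion p q) ≤ 2 * ε / σ := by
  refine ENNReal.toReal_le_of_le_ofReal (by positivity) ?_
  calc P (tradeRegion p' q' \ tradeRegion p q)
    _ ≤ volume ((tradeRegion p' q' \ tradeRegion p q) ∩ (Icc 0 1 ×ˢ Icc 0 1)) /
        ENNReal.ofReal σ :=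
        measure_le_measure_inter_div hsupp hsmooth (measurableSet_Icc.prod measurableSet_Icc)
          ((measurableSet_tradeRegion _ _).diff (measurableSet_tradeRegion _ _))
    _ ≤ (ENNReal.ofReal (p' - p) + ENNReal.ofReal (q - q')) / ENNReal.ofReal σ := by
        gcongr; exact volume_tradeRegion_diff_inter_unitSquare_le p p' q q'
    _ ≤ ENNReal.ofReal (2 * ε) / ENNReal.ofReal σ := by
        rw [← ENNReal.ofReal_add (by linarith) (by linarith)]
        gcongr
        linarith
    _ = ENNReal.ofReal (2 * ε / σ) := (ENNReal.ofReal_div_of_pos hσ).symm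

theorem stmt5_general (σ : ℝ) (hσ : 0 < σ) (P : Measure (ℝ × ℝ)) [IsProbabilityMeasure P]
    (hsupp : P ((Set.Icc (0:ℝ) 1 ×ˢ Set.Icc (0:ℝ) 1)ᶜ) = 0)
    (hsmooth : ∀ A : Set (ℝ × ℝ), MeasurableSet A → P A ≤ volume A / ENNReal.ofReal σ)
    (ε : ℝ) (hε : 0 < ε) (p p' q q' : ℝ)
    (hp' : p' ∈ Set.Icc (0:ℝ) 1)
    (hq' : q' ∈ Set.Icc (0:ℝ) 1)
    (h1 : p ≤ p') (h2 : p' ≤ p + ε) (h3 : q - ε ≤ q') (h4 : q' ≤ q) :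
    ∫ x, Rev p q x.1 x.2 ∂P ≤ (∫ x, Rev p' q' x.1 x.2 ∂P) + 2 * ε + 2 * ε / σ := by
  set A := tradeRegion p q
  set A' := tradeRegion p' q'
  have hD : P.real (A' \ A) ≤ 2 * ε / σ :=
    measureReal_tradeRegion_diff_le hσ hε hsupp hsmooth h1 h2 h3 h4
  have hsplit : P.real A' = P.real A + P.real (A' \ A) := by
    rw [measureReal_sdiff (tradeRegion_mono h1 h4) (measurableSet_tradeRegion p q)]
    ring
  have hA_le : P.real A ≤ 1 := measureReal_le_one
  rw [integral_Rev, integral_Rev, hsplit]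
  nlinarith [measureReal_nonneg (μ := P) (s := A), measureReal_nonneg (μ := P) (s := A' \ A),
    hp'.2, hq'.1]

theorem stmt5 (σ : ℝ) (hσ : 0 < σ) (P : Measure (ℝ × ℝ)) [IsProbabilityMeasure P]
    (hsupp : P ((Set.Icc (0:ℝ) 1 ×ˢ Set.Icc (0:ℝ) 1)ᶜ) = 0)
    (hsmooth : ∀ A : Set (ℝ × ℝ), MeasurableSet A → P A ≤ volume A / ENNReal.ofReal σ)
    (ε : ℝ) (hε : 0 < ε) (p p' q q' : ℝ)
    (hp : p ∈ Set.Icc (0:ℝ) 1) (hp' : p' ∈ Set.Icc (0:ℝ) 1)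
    (hq : q ∈ Set.Icc (0:ℝ) 1) (hq' : q' ∈ Set.Icc (0:ℝ) 1)
    (h1 : p ≤ p') (h2 : p' ≤ p + ε) (h3 : q - ε ≤ q') (h4 : q' ≤ q) :
    ∫ x, Rev p q x.1 x.2 ∂P ≤ (∫ x, Rev p' q' x.1 x.2 ∂P) + 2 * ε + 2 * ε / σ :=
  stmt5_general σ hσ P hsupp hsmooth ε hε p p' q q' hp' hq' h1 h2 h3 h4
end

section
/- For every integer K ≥ 2 and every p ∈ [0,1], there exists a pair (p†, q†) ∈ G_K with q† ≤ p ≤ p† and p† − q† = 1/(K − 1) such that for all s, b ∈ [0,1]: GFT(p†,q†,s,b) ≥ GFT(p,p,s,b) − 1/(K − 1) and Rev(p†,q†,s,b) ≥ −1/(K − 1). -/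
/-- The uniform grid `G_K = {(i/(K-1), j/(K-1)) : i, j ∈ {0,…,K-1}}`. -/
def grid (K : ℕ) : Set (ℝ × ℝ) :=
  {x | ∃ i j : ℕ, i < K ∧ j < K ∧ x.1 = (i : ℝ) / ((K : ℝ) - 1) ∧ x.2 = (j : ℝ) / ((K : ℝ) - 1)}

lemma sub_le_GFT_of_le_of_le {p p' q : ℝ} (hq : q ≤ p) (hp' : p ≤ p') (s b : ℝ) :
    GFT p p s b - (p' - q) ≤ GFT p' q s b := by
  unfold GFT
  by_cases htrade : s ≤ p ∧ p ≤ b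
  · have htrade' : s ≤ p' ∧ q ≤ b := ⟨htrade.1.trans hp', hq.trans htrade.2⟩
    rw [if_pos htrade, if_pos htrade']
    linarith
  · rw [if_neg htrade]
    split_ifs with htrade'
    · linarith [htrade'.1, htrade'.2]
    · linarith

lemma neg_sub_le_Rev {p q : ℝ} (hqp : q ≤ p) (s b : ℝ) : -(p - q) ≤ Rev p q s b := by
  unfold Rev
  split_ifs <;> linarith

lemma exists_nat_div_le_le_succ_div {n : ℕ} (hn : 0 < n) {x : ℝ} (hx : x ∈ Set.Icc (0 : ℝ) 1) :
    ∃ j < n, (j : ℝ) / n ≤ x ∧ x ≤ ((j : ℝ) + 1) / n := by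
  obtain ⟨hx0, hx1⟩ := hx
  have hn' : (0 : ℝ) < n := by exact_mod_cast hn
  refine ⟨min ⌊x * n⌋₊ (n - 1), by omega, ?_, ?_⟩
  · rw [div_le_iff₀ hn']
    exact (Nat.cast_le.mpr (min_le_left _ _)).trans (Nat.floor_le (by positivity))
  · rw [le_div_iff₀ hn']
    rcases le_total ⌊x * n⌋₊ (n - 1) with h | h
    · rw [min_eq_left h]
      exact (Nat.lt_floor_add_one _).le
    · rw [min_eq_right h, Nat.cast_sub (by omega), Nat.cast_one]
      nlinarith

theorem stmt6 (K : ℕ) (hK : 2 ≤ K) (p : ℝ) (hp : p ∈ Set.Icc (0:ℝ) 1) :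
    ∃ pd qd : ℝ, (pd, qd) ∈ grid K ∧ qd ≤ p ∧ p ≤ pd ∧ pd - qd = 1 / ((K : ℝ) - 1) ∧
      ∀ s b : ℝ, s ∈ Set.Icc (0:ℝ) 1 → b ∈ Set.Icc (0:ℝ) 1 →
        GFT pd qd s b ≥ GFT p p s b - 1 / ((K : ℝ) - 1) ∧
        Rev pd qd s b ≥ -(1 / ((K : ℝ) - 1)) := by
  obtain ⟨j, hj, hqp, hppd⟩ := exists_nat_div_le_le_succ_div (n := K - 1) (by omega) hp
  have hcast : ((K - 1 : ℕ) : ℝ) = (K : ℝ) - 1 := by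
    rw [Nat.cast_sub (by omega), Nat.cast_one]
  rw [hcast] at hqp hppd
  have hgap : ((j : ℝ) + 1) / ((K : ℝ) - 1) - j / ((K : ℝ) - 1) = 1 / ((K : ℝ) - 1) := by ring
  refine ⟨_, _, ⟨j + 1, j, by omega, by omega, by push_cast; rfl, rfl⟩, hqp, hppd, hgap,
    fun s b _ _ => ?_⟩
  rw [← hgap]
  exact ⟨sub_le_GFT_of_le_of_le hqp hppd s b, neg_sub_le_Rev (hqp.trans hppd) s b⟩
end

section
/- For every integer K ≥ 2, every T ∈ ℕ, and every sequence (s_t, b_t)_{t=1}^T of points in [0,1]², there exists a pair (p†, q†) ∈ G_K such that Rev(p†,q†,s_t,b_t) ≥ −1/(K − 1) for every t ∈ {1,…,T}, and Σ_{t=1}^T GFT(p†,q†,s_t,b_t) ≥ (sup_{p ∈ [0,1]} Σ_{t=1}^T GFT(p,p,s_t,b_t)) − T/(K − 1). -/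
/-! Posting `a + w` to the seller and `a` to the buyer, with `a ≤ p ≤ a + w`, trades whenever the
fixed price `p` does, and on any other trade `b - s ≥ a - (a + w) = -w`. So it matches the fixed
price `p` up to `w` per round, with a deficit of at most `w`. Every `p ∈ [0,1]` lies in such a cell
of the grid of mesh `w = 1/(K-1)`, and the best cell does at least as well as the cell of `p`. -/

open Finset

lemma GFT_le_GFT_add {p a w : ℝ} (s b : ℝ) (hap : a ≤ p) (hpw : p ≤ a + w) :
    GFT p p s b ≤ GFT (a + w) a s b + w := by
  unfold GFT
  by_cases htrade : s ≤ p ∧ p ≤ b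
  · rw [if_pos htrade, if_pos ⟨htrade.1.trans hpw, hap.trans htrade.2⟩]
    linarith
  · rw [if_neg htrade, mul_zero]
    split_ifs with hcell
    · linarith [hcell.1, hcell.2]
    · linarith

lemma neg_le_Rev {w : ℝ} (a s b : ℝ) (hw : 0 ≤ w) : -w ≤ Rev (a + w) a s b := by
  unfold Rev
  split_ifs <;> linarith

lemma sum_GFT_le_sum_GFT_add {ι : Type*} (S : Finset ι) (s b : ι → ℝ) {p a w : ℝ}
    (hap : a ≤ p) (hpw : p ≤ a + w) :
    ∑ t ∈ S, GFT p p (s t) (b t) ≤ ∑ t ∈ S, GFT (a + w) a (s t) (b t) + #S * w := by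
  calc ∑ t ∈ S, GFT p p (s t) (b t)
      ≤ ∑ t ∈ S, (GFT (a + w) a (s t) (b t) + w) :=
        sum_le_sum fun t _ => GFT_le_GFT_add (s t) (b t) hap hpw
    _ = ∑ t ∈ S, GFT (a + w) a (s t) (b t) + #S * w := by
        rw [sum_add_distrib, sum_const, nsmul_eq_mul]

lemma exists_div_le_le_succ_div {n : ℕ} (hn : 0 < n) {x : ℝ} (hx : x ∈ Set.Icc (0 : ℝ) 1) :
    ∃ j < n, (j : ℝ) / n ≤ x ∧ x ≤ (j : ℝ) / n + 1 / n := by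
  have hn' : (0 : ℝ) < n := Nat.cast_pos.2 hn
  have hxn : 0 ≤ x * n := mul_nonneg hx.1 hn'.le
  rcases lt_or_ge ⌊x * n⌋₊ n with hlt | hge
  · refine ⟨⌊x * n⌋₊, hlt, ?_, ?_⟩
    · rw [div_le_iff₀ hn']
      exact Nat.floor_le hxn
    · rw [← add_div, le_div_iff₀ hn']
      exact (Nat.lt_floor_add_one _).le
  · have hx1 : x = 1 := by
      have : (n : ℝ) ≤ x * n := (Nat.cast_le.2 hge).trans (Nat.floor_le hxn)
      nlinarith [hx.2]
    refine ⟨n - 1, by omega, ?_, ?_⟩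
    · rw [hx1, div_le_one hn']
      exact_mod_cast Nat.sub_le n 1
    · rw [hx1, ← add_div, Nat.cast_pred hn, sub_add_cancel, div_self hn'.ne']

lemma succ_cell_mem_grid {n j : ℕ} (hj : j < n) :
    ((j : ℝ) / n + 1 / n, (j : ℝ) / n) ∈ grid (n + 1) := by
  refine ⟨j + 1, j, by omega, by omega, ?_, ?_⟩ <;> simp [add_div]

theorem stmt7_general (K : ℕ) (hK : 2 ≤ K) (T : ℕ) (s b : Fin T → ℝ) :
    ∃ pd qd : ℝ, (pd, qd) ∈ grid K ∧
      (∀ t, Rev pd qd (s t) (b t) ≥ -(1 / ((K : ℝ) - 1))) ∧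
      ∑ t, GFT pd qd (s t) (b t) ≥
        (⨆ p : Set.Icc (0:ℝ) 1, ∑ t, GFT (p : ℝ) (p : ℝ) (s t) (b t)) - T / ((K : ℝ) - 1) := by
  obtain ⟨n, rfl⟩ : ∃ n, K = n + 1 := ⟨K - 1, by omega⟩
  have hn : 0 < n := by omega
  have hcast : ((n + 1 : ℕ) : ℝ) - 1 = n := by push_cast; ring
  rw [hcast]
  set cellGFT : ℕ → ℝ := fun j => ∑ t, GFT ((j : ℝ) / n + 1 / n) ((j : ℝ) / n) (s t) (b t)
  obtain ⟨i, hi, hbest⟩ := exists_max_image (range n) cellGFT ⟨0, mem_range.2 hn⟩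
  refine ⟨_, _, succ_cell_mem_grid (mem_range.1 hi),
    fun t => neg_le_Rev _ _ _ (by positivity), ?_⟩
  rw [ge_iff_le, sub_le_iff_le_add]
  refine ciSup_le fun ⟨p, hp⟩ => ?_
  obtain ⟨j, hj, hjp, hpj⟩ := exists_div_le_le_succ_div hn hp
  calc ∑ t, GFT p p (s t) (b t)
      ≤ cellGFT j + T * (1 / n) := by
        simpa only [card_univ, Fintype.card_fin] using sum_GFT_le_sum_GFT_add univ s b hjp hpj
    _ ≤ cellGFT i + T / n := by
        rw [mul_one_div]
        gcongr
        exact hbest j (mem_range.2 hj)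

theorem stmt7 (K : ℕ) (hK : 2 ≤ K) (T : ℕ) (s b : Fin T → ℝ)
    (hs : ∀ t, s t ∈ Set.Icc (0:ℝ) 1) (hb : ∀ t, b t ∈ Set.Icc (0:ℝ) 1) :
    ∃ pd qd : ℝ, (pd, qd) ∈ grid K ∧
      (∀ t, Rev pd qd (s t) (b t) ≥ -(1 / ((K : ℝ) - 1))) ∧
      ∑ t, GFT pd qd (s t) (b t) ≥
        (⨆ p : Set.Icc (0:ℝ) 1, ∑ t, GFT (p : ℝ) (p : ℝ) (s t) (b t)) - T / ((K : ℝ) - 1) :=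
  stmt7_general K hK T s b
end

section
/- Let σ > 0, let P be a σ-smooth probability measure on [0,1]², let K ≥ 2 be an integer, let T ∈ ℕ, and let (L_t)_{t=1}^T be probability measures on [0,1]² with Σ_{t=1}^T ‖L_t − P‖_TV ≤ C. Then for every probability measure γ on [0,1]² satisfying Σ_{t=1}^T ∫∫ Rev(p,q,s,b) dγ(p,q) dL_t(s,b) ≥ 0, there exists a probability measure γ̂ supported on the grid G_K such that Σ_{t=1}^T ∫∫ GFT(p,q,s,b) dγ̂(p,q) dL_t(s,b) ≥ Σ_{t=1}^T ∫∫ GFT(p,q,s,b) dγ(p,q) dL_t(s,b) − 2T/(σ(K−1)) − 2C, and Σ_{t=1}^T ∫∫ Rev(p,q,s,b) dγ̂(p,q) dL_t(s,b) ≥ −2T/(σ(K−1)) − 2C. -/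
open MeasureTheory

/-- Total variation norm of the difference of two finite measures. -/
noncomputable def tvDist (μ ν : Measure (ℝ × ℝ)) [IsFiniteMeasure μ] [IsFiniteMeasure ν] : ℝ :=
  ((μ.toSignedMeasure - ν.toSignedMeasure).totalVariation Set.univ).toReal

/-!
Round every price pair of `γ` to the grid, the seller's price `p` down and the buyer's price `q`
up. This only shrinks the set of valuations at which a trade happens; on the trades that survive,
the gain from trade is unchanged and the revenue `q - p` can only grow, while each lost trade costs
at most `1`. The lost valuations lie in two strips of width `1/(K-1)` inside the unit square, which
the `σ`-smooth `P` charges at most `2/(σ(K-1))`, and each `L t` at most that plus `‖L t - P‖_TV`.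
-/

def unitSquare : Set (ℝ × ℝ) := Set.Icc 0 1 ×ˢ Set.Icc 0 1

def IsSmooth (σ : ℝ) (P : Measure (ℝ × ℝ)) : Prop :=
  ∀ A : Set (ℝ × ℝ), MeasurableSet A → P A ≤ volume A / ENNReal.ofReal σ

def tradeSet (p q : ℝ) : Set (ℝ × ℝ) := {y | y.1 ≤ p ∧ q ≤ y.2}

noncomputable def roundToGrid (n : ℕ) (x : ℝ × ℝ) : ℝ × ℝ :=
  (⌊x.1 * n⌋₊ / n, ⌈x.2 * n⌉₊ / n)

lemma integral_le_integral_add_measureReal {α : Type*} [MeasurableSpace α] {ν : Measure α}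
    [IsFiniteMeasure ν] {f g : α → ℝ} {D : Set α} (hf : Integrable f ν) (hg : Integrable g ν)
    (hD : MeasurableSet D) (h : ∀ᵐ y ∂ν, f y ≤ g y + D.indicator 1 y) :
    ∫ y, f y ∂ν ≤ ∫ y, g y ∂ν + ν.real D := by
  have hind : Integrable (D.indicator 1) ν := (integrable_const (1 : ℝ)).indicator hD
  calc ∫ y, f y ∂ν ≤ ∫ y, g y + D.indicator 1 y ∂ν := integral_mono_ae hf (hg.add hind) h
    _ = ∫ y, g y ∂ν + ν.real D := by rw [integral_add hg hind, integral_indicator_one hD]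

lemma integral_le_integral_map_add {α β : Type*} [MeasurableSpace α] [MeasurableSpace β]
    {γ : Measure α} [IsProbabilityMeasure γ] {φ : α → β} (hφ : Measurable φ) {f : α → ℝ}
    {g : β → ℝ} {ε : ℝ} (hf : Integrable f γ) (hg : Integrable g (γ.map φ))
    (h : ∀ᵐ x ∂γ, f x ≤ g (φ x) + ε) :
    ∫ x, f x ∂γ ≤ ∫ y, g y ∂(γ.map φ) + ε := by
  have hgφ : Integrable (fun x ↦ g (φ x)) γ := hg.comp_measurable hφ
  calc ∫ x, f x ∂γ ≤ ∫ x, g (φ x) + ε ∂γ := integral_mono_ae hf (hgφ.add (integrable_const ε)) h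
    _ = ∫ y, g y ∂(γ.map φ) + ε := by
      rw [integral_add hgφ (integrable_const ε), integral_map hφ.aemeasurable hg.1, integral_const,
        probReal_univ, one_smul]

lemma measureReal_le_add_tvDist (μ ν : Measure (ℝ × ℝ)) [IsFiniteMeasure μ] [IsFiniteMeasure ν]
    {A : Set (ℝ × ℝ)} (hA : MeasurableSet A) : μ.real A ≤ ν.real A + tvDist μ ν := by
  set s := μ.toSignedMeasure - ν.toSignedMeasure
  have h : μ.real A - ν.real A ≤ s.totalVariation.real Set.univ := calc
    μ.real A - ν.real A = s A := (Measure.toSignedMeasure_sub_apply hA).symm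
    _ ≤ ‖s A‖ := Real.le_norm_self _
    _ ≤ s.totalVariation.real A := s.norm_le_totalVariation A
    _ ≤ s.totalVariation.real Set.univ := measureReal_mono (Set.subset_univ A)
  exact sub_le_iff_le_add'.1 h

lemma measurableSet_tradeSet (p q : ℝ) : MeasurableSet (tradeSet p q) :=
  (measurableSet_le measurable_fst measurable_const).inter
    (measurableSet_le measurable_const measurable_snd)

lemma tradeSet_mono {p q p' q' : ℝ} (hp : p' ≤ p) (hq : q ≤ q') :
    tradeSet p' q' ⊆ tradeSet p q :=
  fun _ ⟨hs, hb⟩ ↦ ⟨hs.trans hp, hq.trans hb⟩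

lemma tradeSet_diff_subset {p q p' q' : ℝ} :
    tradeSet p q \ tradeSet p' q' ⊆
      (Set.Ioc p' p ×ˢ Set.Icc 0 1 ∪ Set.Icc 0 1 ×ˢ Set.Ico q q') ∪ unitSquareᶜ := by
  rintro ⟨s, b⟩ ⟨⟨hs, hb⟩, hlost⟩
  by_cases hy : (s, b) ∈ unitSquare
  · obtain ⟨hs01, hb01⟩ := hy
    simp only [tradeSet, Set.mem_ofPred_eq, not_and_or, not_le] at hlost
    rcases hlost with hs' | hb'
    · exact .inl (.inl ⟨⟨hs', hs⟩, hb01⟩)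
    · exact .inl (.inr ⟨hs01, ⟨hb, hb'⟩⟩)
  · exact .inr hy

lemma measurable_GFT_s8 :
    Measurable fun z : (ℝ × ℝ) × (ℝ × ℝ) ↦ GFT z.1.1 z.1.2 z.2.1 z.2.2 := by
  unfold GFT
  refine (measurable_snd.snd.sub measurable_snd.fst).mul (Measurable.ite ?_ measurable_const
    measurable_const)
  exact (measurableSet_le measurable_snd.fst measurable_fst.fst).inter
    (measurableSet_le measurable_fst.snd measurable_snd.snd)

lemma measurable_Rev :
    Measurable fun z : (ℝ × ℝ) × (ℝ × ℝ) ↦ Rev z.1.1 z.1.2 z.2.1 z.2.2 := by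
  unfold Rev
  refine (measurable_fst.snd.sub measurable_fst.fst).mul (Measurable.ite ?_ measurable_const
    measurable_const)
  exact (measurableSet_le measurable_snd.fst measurable_fst.fst).inter
    (measurableSet_le measurable_fst.snd measurable_snd.snd)

lemma measurable_GFT_left (p q : ℝ) : Measurable fun y : ℝ × ℝ ↦ GFT p q y.1 y.2 :=
  measurable_GFT_s8.comp (measurable_prodMk_left (x := (p, q)))

lemma measurable_Rev_left (p q : ℝ) : Measurable fun y : ℝ × ℝ ↦ Rev p q y.1 y.2 :=
  measurable_Rev.comp (measurable_prodMk_left (x := (p, q)))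

lemma abs_GFT_le_one_s8 (p q : ℝ) {y : ℝ × ℝ} (hy : y ∈ unitSquare) : |GFT p q y.1 y.2| ≤ 1 := by
  obtain ⟨⟨hs₀, hs₁⟩, hb₀, hb₁⟩ := hy
  unfold GFT
  split_ifs <;> rw [abs_le] <;> constructor <;> linarith

lemma abs_Rev_le_one {x : ℝ × ℝ} (hx : x ∈ unitSquare) (s b : ℝ) : |Rev x.1 x.2 s b| ≤ 1 := by
  obtain ⟨⟨hp₀, hp₁⟩, hq₀, hq₁⟩ := hx
  unfold Rev
  split_ifs <;> rw [abs_le] <;> constructor <;> linarith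

lemma GFT_le_add_indicator {p q p' q' : ℝ} (hp : p' ≤ p) (hq : q ≤ q') {y : ℝ × ℝ}
    (hy : y ∈ unitSquare) :
    GFT p q y.1 y.2 ≤ GFT p' q' y.1 y.2 + (tradeSet p q \ tradeSet p' q').indicator 1 y := by
  have hmono := @tradeSet_mono p q p' q' hp hq y
  obtain ⟨⟨hs₀, hs₁⟩, hb₀, hb₁⟩ := hy
  simp only [GFT, tradeSet, Set.indicator, Set.mem_sdiff, Set.mem_ofPred_eq, Pi.one_apply]
    at hmono ⊢
  split_ifs <;> first | linarith | tauto

lemma Rev_le_add_indicator {p q p' q' : ℝ} (hp : p' ≤ p) (hq : q ≤ q') (hpq : q - p ≤ 1)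
    (y : ℝ × ℝ) :
    Rev p q y.1 y.2 ≤ Rev p' q' y.1 y.2 + (tradeSet p q \ tradeSet p' q').indicator 1 y := by
  have hmono := @tradeSet_mono p q p' q' hp hq y
  simp only [Rev, tradeSet, Set.indicator, Set.mem_sdiff, Set.mem_ofPred_eq, Pi.one_apply]
    at hmono ⊢
  split_ifs <;> first | linarith | tauto

lemma integral_GFT_le_add_measureReal {ν : Measure (ℝ × ℝ)} [IsFiniteMeasure ν]
    (hν : ν unitSquareᶜ = 0) {p q p' q' : ℝ} (hp : p' ≤ p) (hq : q ≤ q') :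
    ∫ y, GFT p q y.1 y.2 ∂ν ≤
      ∫ y, GFT p' q' y.1 y.2 ∂ν + ν.real (tradeSet p q \ tradeSet p' q') := by
  have hsq : ∀ᵐ y ∂ν, y ∈ unitSquare := ae_iff.2 hν
  have hint : ∀ p q, Integrable (fun y : ℝ × ℝ ↦ GFT p q y.1 y.2) ν := fun p q ↦
    .of_bound (measurable_GFT_left p q).aestronglyMeasurable 1
      (hsq.mono fun y hy ↦ abs_GFT_le_one_s8 p q hy)
  exact integral_le_integral_add_measureReal (hint p q) (hint p' q')
    ((measurableSet_tradeSet p q).diff (measurableSet_tradeSet p' q'))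
    (hsq.mono fun y hy ↦ GFT_le_add_indicator hp hq hy)

lemma integral_Rev_le_add_measureReal (ν : Measure (ℝ × ℝ)) [IsFiniteMeasure ν] {p q p' q' : ℝ}
    (hp : p' ≤ p) (hq : q ≤ q') (hpq : q - p ≤ 1) :
    ∫ y, Rev p q y.1 y.2 ∂ν ≤
      ∫ y, Rev p' q' y.1 y.2 ∂ν + ν.real (tradeSet p q \ tradeSet p' q') := by
  have hint : ∀ p q, Integrable (fun y : ℝ × ℝ ↦ Rev p q y.1 y.2) ν := fun p q ↦
    .of_bound (measurable_Rev_left p q).aestronglyMeasurable |q - p|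
      (ae_of_all _ fun y ↦ by unfold Rev; split_ifs <;> simp)
  exact integral_le_integral_add_measureReal (hint p q) (hint p' q')
    ((measurableSet_tradeSet p q).diff (measurableSet_tradeSet p' q'))
    (ae_of_all _ fun y ↦ Rev_le_add_indicator hp hq hpq y)

lemma integrable_integral_GFT {ν : Measure (ℝ × ℝ)} [IsFiniteMeasure ν] (hν : ν unitSquareᶜ = 0)
    (μ : Measure (ℝ × ℝ)) [IsFiniteMeasure μ] :
    Integrable (fun x : ℝ × ℝ ↦ ∫ y, GFT x.1 x.2 y.1 y.2 ∂ν) μ := by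
  refine .of_bound measurable_GFT_s8.stronglyMeasurable.integral_prod_right'.aestronglyMeasurable
    (1 * ν.real Set.univ) (ae_of_all _ fun x ↦ norm_integral_le_of_norm_le_const ?_)
  exact (ae_iff.2 hν).mono fun y hy ↦ abs_GFT_le_one_s8 x.1 x.2 hy

lemma integrable_integral_Rev (ν : Measure (ℝ × ℝ)) [IsFiniteMeasure ν]
    {μ : Measure (ℝ × ℝ)} [IsFiniteMeasure μ] (hμ : μ unitSquareᶜ = 0) :
    Integrable (fun x : ℝ × ℝ ↦ ∫ y, Rev x.1 x.2 y.1 y.2 ∂ν) μ := by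
  refine .of_bound measurable_Rev.stronglyMeasurable.integral_prod_right'.aestronglyMeasurable
    (1 * ν.real Set.univ) ((ae_iff.2 hμ).mono fun x hx ↦ norm_integral_le_of_norm_le_const ?_)
  exact ae_of_all _ fun y ↦ abs_Rev_le_one hx y.1 y.2

lemma IsSmooth.apply_le {σ : ℝ} {P : Measure (ℝ × ℝ)} (hP : IsSmooth σ P) (hσ : 0 < σ)
    {A : Set (ℝ × ℝ)} (hA : MeasurableSet A) {a : ℝ} (h : volume A ≤ ENNReal.ofReal a) :
    P A ≤ ENNReal.ofReal (a / σ) := by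
  rw [ENNReal.ofReal_div_of_pos hσ]
  exact (hP A hA).trans (ENNReal.div_le_div_right h _)

lemma volume_Ioc_prod_Icc (a b : ℝ) :
    volume (Set.Ioc a b ×ˢ Set.Icc (0 : ℝ) 1) = ENNReal.ofReal (b - a) := by
  simp [Measure.volume_eq_prod, Measure.prod_prod]

lemma volume_Icc_prod_Ico (a b : ℝ) :
    volume (Set.Icc (0 : ℝ) 1 ×ˢ Set.Ico a b) = ENNReal.ofReal (b - a) := by
  simp [Measure.volume_eq_prod, Measure.prod_prod]

lemma IsSmooth.measureReal_tradeSet_diff_le {σ : ℝ} {P : Measure (ℝ × ℝ)} [IsFiniteMeasure P]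
    (hP : IsSmooth σ P) (hσ : 0 < σ) (hPsq : P unitSquareᶜ = 0) {p q p' q' : ℝ} (hp : p' ≤ p)
    (hq : q ≤ q') :
    P.real (tradeSet p q \ tradeSet p' q') ≤ ((p - p') + (q' - q)) / σ := by
  refine ENNReal.toReal_le_of_le_ofReal
    (div_nonneg (add_nonneg (sub_nonneg.2 hp) (sub_nonneg.2 hq)) hσ.le) ?_
  calc P (tradeSet p q \ tradeSet p' q')
      ≤ P (Set.Ioc p' p ×ˢ Set.Icc 0 1) + P (Set.Icc 0 1 ×ˢ Set.Ico q q') + P unitSquareᶜ :=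
        (measure_mono tradeSet_diff_subset).trans
          ((measure_union_le _ _).trans (add_le_add_left (measure_union_le _ _) _))
    _ ≤ ENNReal.ofReal ((p - p') / σ) + ENNReal.ofReal ((q' - q) / σ) + 0 := by
        gcongr
        · exact hP.apply_le hσ (measurableSet_Ioc.prod measurableSet_Icc)
            (volume_Ioc_prod_Icc _ _).le
        · exact hP.apply_le hσ (measurableSet_Icc.prod measurableSet_Ico)
            (volume_Icc_prod_Ico _ _).le
        · exact hPsq.le
    _ = ENNReal.ofReal (((p - p') + (q' - q)) / σ) := by
        rw [add_zero, add_div, ENNReal.ofReal_add (div_nonneg (sub_nonneg.2 hp) hσ.le)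
          (div_nonneg (sub_nonneg.2 hq) hσ.le)]

lemma measurable_roundToGrid (n : ℕ) : Measurable (roundToGrid n) := by
  unfold roundToGrid
  fun_prop

lemma roundToGrid_fst_mem {n : ℕ} (hn : 0 < n) {x : ℝ × ℝ} (hx : 0 ≤ x.1) :
    (roundToGrid n x).1 ∈ Set.Icc (x.1 - (n : ℝ)⁻¹) x.1 := by
  have hn' : (0 : ℝ) < n := Nat.cast_pos.2 hn
  constructor
  · rw [roundToGrid, le_div_iff₀ hn', sub_mul, inv_mul_cancel₀ hn'.ne']
    linarith [Nat.lt_floor_add_one (x.1 * n)]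
  · rw [roundToGrid, div_le_iff₀ hn']
    exact Nat.floor_le (by positivity)

lemma roundToGrid_snd_mem {n : ℕ} (hn : 0 < n) {x : ℝ × ℝ} (hx : 0 ≤ x.2) :
    (roundToGrid n x).2 ∈ Set.Icc x.2 (x.2 + (n : ℝ)⁻¹) := by
  have hn' : (0 : ℝ) < n := Nat.cast_pos.2 hn
  constructor
  · rw [roundToGrid, le_div_iff₀ hn']
    exact Nat.le_ceil _
  · rw [roundToGrid, div_le_iff₀ hn', add_mul, inv_mul_cancel₀ hn'.ne']
    exact (Nat.ceil_lt_add_one (by positivity)).le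

lemma roundToGrid_mem_grid (n : ℕ) {x : ℝ × ℝ} (hx : x ∈ unitSquare) :
    roundToGrid n x ∈ grid (n + 1) := by
  obtain ⟨⟨-, hp₁⟩, hq₀, hq₁⟩ := hx
  refine ⟨⌊x.1 * n⌋₊, ⌈x.2 * n⌉₊, Nat.lt_succ_of_le (Nat.floor_le_of_le ?_),
    Nat.lt_succ_of_le (Nat.ceil_le.2 ?_), by simp [roundToGrid], by simp [roundToGrid]⟩
  all_goals nlinarith [(n.cast_nonneg : (0 : ℝ) ≤ n)]

lemma grid_subset_unitSquare (K : ℕ) : grid K ⊆ unitSquare := by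
  rintro ⟨p, q⟩ ⟨i, j, hi, hj, rfl : p = _, rfl : q = _⟩
  have hi' : (i : ℝ) ≤ K - 1 := by
    rw [le_sub_iff_add_le]; exact_mod_cast hi
  have hj' : (j : ℝ) ≤ K - 1 := by
    rw [le_sub_iff_add_le]; exact_mod_cast hj
  have hK : (0 : ℝ) ≤ K - 1 := (i.cast_nonneg).trans hi'
  exact ⟨⟨by positivity, div_le_one_of_le₀ hi' hK⟩, by positivity, div_le_one_of_le₀ hj' hK⟩

lemma measurableSet_grid (K : ℕ) : MeasurableSet (grid K) := by
  refine (Set.Countable.mono ?_ (Set.countable_range fun ij : ℕ × ℕ ↦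
    ((ij.1 : ℝ) / ((K : ℝ) - 1), (ij.2 : ℝ) / ((K : ℝ) - 1)))).measurableSet
  rintro x ⟨i, j, -, -, hi, hj⟩
  exact ⟨(i, j), Prod.ext hi.symm hj.symm⟩

lemma map_roundToGrid_compl_grid {γ : Measure (ℝ × ℝ)} (hγ : γ unitSquareᶜ = 0) (n : ℕ) :
    γ.map (roundToGrid n) (grid (n + 1))ᶜ = 0 := by
  rw [Measure.map_apply (measurable_roundToGrid n) (measurableSet_grid _).compl]
  exact measure_mono_null (fun x hx hxsq ↦ hx (roundToGrid_mem_grid n hxsq)) hγ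

lemma measureReal_tradeSet_diff_roundToGrid_le {σ : ℝ} {P : Measure (ℝ × ℝ)} [IsFiniteMeasure P]
    (hP : IsSmooth σ P) (hσ : 0 < σ) (hPsq : P unitSquareᶜ = 0) {n : ℕ} (hn : 0 < n)
    (ν : Measure (ℝ × ℝ)) [IsFiniteMeasure ν] {x : ℝ × ℝ} (hx : x ∈ unitSquare) :
    ν.real (tradeSet x.1 x.2 \ tradeSet (roundToGrid n x).1 (roundToGrid n x).2) ≤
      2 / (σ * n) + tvDist ν P := by
  obtain ⟨hp, hp'⟩ := roundToGrid_fst_mem hn hx.1.1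
  obtain ⟨hq, hq'⟩ := roundToGrid_snd_mem hn hx.2.1
  have hD := (measurableSet_tradeSet x.1 x.2).diff
    (measurableSet_tradeSet (roundToGrid n x).1 (roundToGrid n x).2)
  have hPD := hP.measureReal_tradeSet_diff_le hσ hPsq hp' hq
  have hgap : ((x.1 - (roundToGrid n x).1) + ((roundToGrid n x).2 - x.2)) / σ ≤ 2 / (σ * n) := by
    calc _ ≤ (2 * (n : ℝ)⁻¹) / σ := by gcongr; linarith
      _ = 2 / (σ * n) := by ring
  linarith [measureReal_le_add_tvDist ν P hD]

lemma integral_GFT_le_integral_map_roundToGrid_add {σ : ℝ} {P : Measure (ℝ × ℝ)}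
    [IsFiniteMeasure P] (hP : IsSmooth σ P) (hσ : 0 < σ) (hPsq : P unitSquareᶜ = 0) {n : ℕ}
    (hn : 0 < n) (ν : Measure (ℝ × ℝ)) [IsFiniteMeasure ν] (hν : ν unitSquareᶜ = 0)
    {γ : Measure (ℝ × ℝ)} [IsProbabilityMeasure γ] (hγ : γ unitSquareᶜ = 0) :
    ∫ x, ∫ y, GFT x.1 x.2 y.1 y.2 ∂ν ∂γ ≤
      ∫ x, ∫ y, GFT x.1 x.2 y.1 y.2 ∂ν ∂(γ.map (roundToGrid n)) + (2 / (σ * n) + tvDist ν P) :=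
  integral_le_integral_map_add (measurable_roundToGrid n) (integrable_integral_GFT hν γ)
    (integrable_integral_GFT hν _) <| (ae_iff.2 hγ).mono fun _ hx ↦
      (integral_GFT_le_add_measureReal hν (roundToGrid_fst_mem hn hx.1.1).2
        (roundToGrid_snd_mem hn hx.2.1).1).trans
      (add_le_add_right (measureReal_tradeSet_diff_roundToGrid_le hP hσ hPsq hn ν hx) _)

lemma integral_Rev_le_integral_map_roundToGrid_add {σ : ℝ} {P : Measure (ℝ × ℝ)}
    [IsFiniteMeasure P] (hP : IsSmooth σ P) (hσ : 0 < σ) (hPsq : P unitSquareᶜ = 0) {n : ℕ}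
    (hn : 0 < n) (ν : Measure (ℝ × ℝ)) [IsFiniteMeasure ν]
    {γ : Measure (ℝ × ℝ)} [IsProbabilityMeasure γ] (hγ : γ unitSquareᶜ = 0) :
    ∫ x, ∫ y, Rev x.1 x.2 y.1 y.2 ∂ν ∂γ ≤
      ∫ x, ∫ y, Rev x.1 x.2 y.1 y.2 ∂ν ∂(γ.map (roundToGrid n)) + (2 / (σ * n) + tvDist ν P) := by
  have hγhat : γ.map (roundToGrid n) unitSquareᶜ = 0 :=
    measure_mono_null (Set.compl_subset_compl.2 (grid_subset_unitSquare _))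
      (map_roundToGrid_compl_grid hγ n)
  refine integral_le_integral_map_add (measurable_roundToGrid n) (integrable_integral_Rev ν hγ)
    (integrable_integral_Rev ν hγhat) <| (ae_iff.2 hγ).mono fun x hx ↦ ?_
  obtain ⟨⟨hp₀, -⟩, hq₀, hq₁⟩ := id hx
  exact (integral_Rev_le_add_measureReal ν (roundToGrid_fst_mem hn hp₀).2
      (roundToGrid_snd_mem hn hq₀).1 (by linarith)).trans
    (add_le_add_right (measureReal_tradeSet_diff_roundToGrid_le hP hσ hPsq hn ν hx) _)

theorem stmt8 (σ : ℝ) (hσ : 0 < σ) (P : Measure (ℝ × ℝ)) [IsProbabilityMeasure P]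
    (hPsupp : P ((Set.Icc (0:ℝ) 1 ×ˢ Set.Icc (0:ℝ) 1)ᶜ) = 0)
    (hsmooth : ∀ A : Set (ℝ × ℝ), MeasurableSet A → P A ≤ volume A / ENNReal.ofReal σ)
    (K : ℕ) (hK : 2 ≤ K) (T : ℕ) (L : Fin T → Measure (ℝ × ℝ))
    [∀ t, IsProbabilityMeasure (L t)]
    (hLsupp : ∀ t, (L t) ((Set.Icc (0:ℝ) 1 ×ˢ Set.Icc (0:ℝ) 1)ᶜ) = 0)
    (C : ℝ) (hC : ∑ t, tvDist (L t) P ≤ C)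
    (γ : Measure (ℝ × ℝ)) [IsProbabilityMeasure γ]
    (hγsupp : γ ((Set.Icc (0:ℝ) 1 ×ˢ Set.Icc (0:ℝ) 1)ᶜ) = 0)
    (hγfeas : 0 ≤ ∑ t, ∫ x, (∫ y, Rev x.1 x.2 y.1 y.2 ∂(L t)) ∂γ) :
    ∃ γhat : Measure (ℝ × ℝ), IsProbabilityMeasure γhat ∧ γhat ((grid K)ᶜ) = 0 ∧
      (∑ t, ∫ x, (∫ y, GFT x.1 x.2 y.1 y.2 ∂(L t)) ∂γhat ≥
        (∑ t, ∫ x, (∫ y, GFT x.1 x.2 y.1 y.2 ∂(L t)) ∂γ)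
          - 2 * T / (σ * ((K : ℝ) - 1)) - 2 * C) ∧
      (∑ t, ∫ x, (∫ y, Rev x.1 x.2 y.1 y.2 ∂(L t)) ∂γhat ≥
        -(2 * T / (σ * ((K : ℝ) - 1))) - 2 * C) := by
  obtain ⟨n, rfl⟩ : ∃ n, K = n + 1 := ⟨K - 1, by omega⟩
  have hn : 0 < n := by omega
  rw [show ((n + 1 : ℕ) : ℝ) - 1 = n by push_cast; ring]
  have hC₀ : 0 ≤ C := (Finset.sum_nonneg fun t _ ↦ ENNReal.toReal_nonneg).trans hC
  have hbudget : ∑ t, (2 / (σ * n) + tvDist (L t) P) ≤ 2 * T / (σ * n) + C := by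
    rw [Finset.sum_add_distrib, Finset.sum_const, Finset.card_univ, Fintype.card_fin, nsmul_eq_mul]
    linarith [show (T : ℝ) * (2 / (σ * n)) = 2 * T / (σ * n) by ring]
  have hGFT := Finset.sum_le_sum fun t (_ : t ∈ Finset.univ) ↦
    integral_GFT_le_integral_map_roundToGrid_add hsmooth hσ hPsupp hn (L t) (hLsupp t) hγsupp
  have hRev := Finset.sum_le_sum fun t (_ : t ∈ Finset.univ) ↦
    integral_Rev_le_integral_map_roundToGrid_add hsmooth hσ hPsupp hn (L t) hγsupp
  rw [Finset.sum_add_distrib] at hGFT hRev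
  exact ⟨γ.map (roundToGrid n),
    Measure.isProbabilityMeasure_map (measurable_roundToGrid n).aemeasurable,
    map_roundToGrid_compl_grid hγsupp n, by linarith, by linarith⟩
end

section
/- Let T ∈ ℕ, let (L_t)_{t=1}^T be probability measures on [0,1]², and let γ̂ and φ be probability measures on [0,1]². Suppose B ≥ 0 and B' > 0 are such that Σ_{t=1}^T ∫∫ Rev(p,q,s,b) dγ̂(p,q) dL_t(s,b) ≥ −B and Σ_{t=1}^T ∫∫ Rev(p,q,s,b) dφ(p,q) dL_t(s,b) ≥ B'. Set θ := B/(B + B') and let π := (1 − θ)·γ̂ + θ·φ be the mixture measure. Then π is a probability measure satisfying Σ_{t=1}^T ∫∫ Rev(p,q,s,b) dπ(p,q) dL_t(s,b) ≥ 0 and Σ_{t=1}^T ∫∫ GFT(p,q,s,b) dπ(p,q) dL_t(s,b) ≥ Σ_{t=1}^T ∫∫ GFT(p,q,s,b) dγ̂(p,q) dL_t(s,b) − θ·T. -/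
open MeasureTheory

/-!
Integrals against the mixture `π = (1 - θ) γ̂ + θ φ` are the corresponding convex combinations, so
the cumulative revenue under `π` is at least `(1 - θ)(-B) + θ B' = 0` by the choice of `θ`. For
the gain from trade, `GFT ≥ Rev` makes the cumulative gain under `φ` at least `B' > 0`, and
`GFT ≤ 1` bounds the cumulative gain under `γ̂` by `T`; hence the gain under `π` is at least
`(1 - θ)` times the gain under `γ̂`, which is at least that gain minus `θ T`.
-/

open Set

namespace BilateralTrade

section IteratedIntegral

variable {α β : Type*} [MeasurableSpace α] [MeasurableSpace β] {μ : Measure α} {ν : Measure β}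

lemma integral_integral_mono [SFinite μ] [SFinite ν] {F G : α × β → ℝ}
    (hF : Integrable F (μ.prod ν)) (hG : Integrable G (μ.prod ν)) (hFG : F ≤ G) :
    ∫ x, ∫ y, F (x, y) ∂ν ∂μ ≤ ∫ x, ∫ y, G (x, y) ∂ν ∂μ := by
  rw [← integral_prod F hF, ← integral_prod G hG]
  exact integral_mono hF hG hFG

lemma integral_integral_le_of_ae_le [IsProbabilityMeasure μ] [IsProbabilityMeasure ν]
    {F : α × β → ℝ} {C : ℝ} (hF : Integrable F (μ.prod ν)) (hFC : ∀ᵐ z ∂μ.prod ν, F z ≤ C) :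
    ∫ x, ∫ y, F (x, y) ∂ν ∂μ ≤ C := by
  rw [← integral_prod F hF]
  simpa using integral_mono_ae hF (integrable_const C) hFC

end IteratedIntegral

section Mixture

variable {α : Type*} [MeasurableSpace α] {μ₁ μ₂ : Measure α} {a b : ℝ}

lemma isProbabilityMeasure_ofReal_smul_add [IsProbabilityMeasure μ₁] [IsProbabilityMeasure μ₂]
    (ha : 0 ≤ a) (hb : 0 ≤ b) (hab : a + b = 1) :
    IsProbabilityMeasure (ENNReal.ofReal a • μ₁ + ENNReal.ofReal b • μ₂) := by
  constructor
  simp [← ENNReal.ofReal_add ha hb, hab]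

lemma integral_ofReal_smul_add {f : α → ℝ} (ha : 0 ≤ a) (hb : 0 ≤ b)
    (hf₁ : Integrable f μ₁) (hf₂ : Integrable f μ₂) :
    ∫ x, f x ∂(ENNReal.ofReal a • μ₁ + ENNReal.ofReal b • μ₂) =
      a * ∫ x, f x ∂μ₁ + b * ∫ x, f x ∂μ₂ := by
  rw [integral_add_measure (hf₁.smul_measure ENNReal.ofReal_ne_top)
      (hf₂.smul_measure ENNReal.ofReal_ne_top), integral_smul_measure, integral_smul_measure,
    ENNReal.toReal_ofReal ha, ENNReal.toReal_ofReal hb, smul_eq_mul, smul_eq_mul]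

end Mixture

lemma Rev_le_GFT (p q s b : ℝ) : Rev p q s b ≤ GFT p q s b := by
  unfold Rev GFT
  split_ifs with h
  · linarith [h.1, h.2]
  · simp

lemma abs_Rev_le_one {p q : ℝ} (hp : p ∈ Icc (0 : ℝ) 1) (hq : q ∈ Icc (0 : ℝ) 1) (s b : ℝ) :
    |Rev p q s b| ≤ 1 := by
  unfold Rev
  split_ifs
  · rw [mul_one, abs_le]
    constructor <;> linarith [hp.1, hp.2, hq.1, hq.2]
  · simp

lemma abs_GFT_le_one (p q : ℝ) {s b : ℝ} (hs : s ∈ Icc (0 : ℝ) 1) (hb : b ∈ Icc (0 : ℝ) 1) :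
    |GFT p q s b| ≤ 1 := by
  unfold GFT
  split_ifs
  · rw [mul_one, abs_le]
    constructor <;> linarith [hs.1, hs.2, hb.1, hb.2]
  · simp

def onPairs (f : ℝ → ℝ → ℝ → ℝ → ℝ) (z : (ℝ × ℝ) × (ℝ × ℝ)) : ℝ :=
  f z.1.1 z.1.2 z.2.1 z.2.2

lemma measurableSet_trade :
    MeasurableSet {z : (ℝ × ℝ) × (ℝ × ℝ) | z.2.1 ≤ z.1.1 ∧ z.1.2 ≤ z.2.2} := by
  measurability

lemma measurable_onPairs_Rev : Measurable (onPairs Rev) :=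
  .mul (by fun_prop) (.ite measurableSet_trade measurable_const measurable_const)

lemma measurable_onPairs_GFT : Measurable (onPairs GFT) :=
  .mul (by fun_prop) (.ite measurableSet_trade measurable_const measurable_const)

section Integrability

variable (μ ν : Measure (ℝ × ℝ))

lemma integrable_onPairs_Rev [IsFiniteMeasure μ] [IsFiniteMeasure ν]
    (hμ : μ (Icc (0 : ℝ) 1 ×ˢ Icc (0 : ℝ) 1)ᶜ = 0) :
    Integrable (onPairs Rev) (μ.prod ν) := by
  refine .of_bound measurable_onPairs_Rev.aestronglyMeasurable 1 ?_
  filter_upwards [Measure.quasiMeasurePreserving_fst.ae (mem_ae_iff.2 hμ)] with z hz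
  exact abs_Rev_le_one (mem_prod.1 hz).1 (mem_prod.1 hz).2 _ _

lemma ae_abs_onPairs_GFT_le_one (hν : ν (Icc (0 : ℝ) 1 ×ˢ Icc (0 : ℝ) 1)ᶜ = 0) :
    ∀ᵐ z ∂μ.prod ν, |onPairs GFT z| ≤ 1 := by
  filter_upwards [Measure.quasiMeasurePreserving_snd.ae (mem_ae_iff.2 hν)] with z hz
  exact abs_GFT_le_one _ _ (mem_prod.1 hz).1 (mem_prod.1 hz).2

lemma integrable_onPairs_GFT [IsFiniteMeasure μ] [IsFiniteMeasure ν]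
    (hν : ν (Icc (0 : ℝ) 1 ×ˢ Icc (0 : ℝ) 1)ᶜ = 0) :
    Integrable (onPairs GFT) (μ.prod ν) :=
  .of_bound measurable_onPairs_GFT.aestronglyMeasurable 1 (ae_abs_onPairs_GFT_le_one μ ν hν)

end Integrability

noncomputable def totalExpected {T : ℕ} (f : ℝ → ℝ → ℝ → ℝ → ℝ) (L : Fin T → Measure (ℝ × ℝ))
    (μ : Measure (ℝ × ℝ)) : ℝ :=
  ∑ t, ∫ x, ∫ y, onPairs f (x, y) ∂(L t) ∂μ

variable {T : ℕ} {L : Fin T → Measure (ℝ × ℝ)} [∀ t, IsProbabilityMeasure (L t)]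

lemma totalExpected_ofReal_smul_add {f : ℝ → ℝ → ℝ → ℝ → ℝ} {μ₁ μ₂ : Measure (ℝ × ℝ)} {a b : ℝ}
    (ha : 0 ≤ a) (hb : 0 ≤ b) (hf₁ : ∀ t, Integrable (onPairs f) (μ₁.prod (L t)))
    (hf₂ : ∀ t, Integrable (onPairs f) (μ₂.prod (L t))) :
    totalExpected f L (ENNReal.ofReal a • μ₁ + ENNReal.ofReal b • μ₂) =
      a * totalExpected f L μ₁ + b * totalExpected f L μ₂ := by
  simp only [totalExpected, Finset.mul_sum, ← Finset.sum_add_distrib]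
  exact Finset.sum_congr rfl fun t _ =>
    integral_ofReal_smul_add ha hb (hf₁ t).integral_prod_left (hf₂ t).integral_prod_left

lemma totalExpected_Rev_le_GFT (μ : Measure (ℝ × ℝ)) [IsFiniteMeasure μ]
    (hL : ∀ t, L t (Icc (0 : ℝ) 1 ×ˢ Icc (0 : ℝ) 1)ᶜ = 0)
    (hμ : μ (Icc (0 : ℝ) 1 ×ˢ Icc (0 : ℝ) 1)ᶜ = 0) :
    totalExpected Rev L μ ≤ totalExpected GFT L μ :=
  Finset.sum_le_sum fun t _ =>
    integral_integral_mono (integrable_onPairs_Rev μ (L t) hμ)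
      (integrable_onPairs_GFT μ (L t) (hL t)) fun _ => Rev_le_GFT _ _ _ _

lemma totalExpected_GFT_le (μ : Measure (ℝ × ℝ)) [IsProbabilityMeasure μ]
    (hL : ∀ t, L t (Icc (0 : ℝ) 1 ×ˢ Icc (0 : ℝ) 1)ᶜ = 0) :
    totalExpected GFT L μ ≤ T := by
  calc totalExpected GFT L μ ≤ ∑ _t : Fin T, (1 : ℝ) :=
        Finset.sum_le_sum fun t _ =>
          integral_integral_le_of_ae_le (integrable_onPairs_GFT μ (L t) (hL t))
            ((ae_abs_onPairs_GFT_le_one μ (L t) (hL t)).mono fun _ h => (le_abs_self _).trans h)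
    _ = T := by simp

end BilateralTrade

open BilateralTrade in
theorem stmt9 (T : ℕ) (L : Fin T → Measure (ℝ × ℝ)) [∀ t, IsProbabilityMeasure (L t)]
    (hLsupp : ∀ t, (L t) ((Set.Icc (0:ℝ) 1 ×ˢ Set.Icc (0:ℝ) 1)ᶜ) = 0)
    (γhat φ : Measure (ℝ × ℝ)) [IsProbabilityMeasure γhat] [IsProbabilityMeasure φ]
    (hγsupp : γhat ((Set.Icc (0:ℝ) 1 ×ˢ Set.Icc (0:ℝ) 1)ᶜ) = 0)
    (hφsupp : φ ((Set.Icc (0:ℝ) 1 ×ˢ Set.Icc (0:ℝ) 1)ᶜ) = 0)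
    (B B' : ℝ) (hB : 0 ≤ B) (hB' : 0 < B')
    (hγrev : ∑ t, ∫ x, (∫ y, Rev x.1 x.2 y.1 y.2 ∂(L t)) ∂γhat ≥ -B)
    (hφrev : ∑ t, ∫ x, (∫ y, Rev x.1 x.2 y.1 y.2 ∂(L t)) ∂φ ≥ B')
    (θ : ℝ) (hθ : θ = B / (B + B'))
    (π : Measure (ℝ × ℝ))
    (hπ : π = ENNReal.ofReal (1 - θ) • γhat + ENNReal.ofReal θ • φ) :
    IsProbabilityMeasure π ∧
    (∑ t, ∫ x, (∫ y, Rev x.1 x.2 y.1 y.2 ∂(L t)) ∂π ≥ 0) ∧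
    (∑ t, ∫ x, (∫ y, GFT x.1 x.2 y.1 y.2 ∂(L t)) ∂π ≥
      (∑ t, ∫ x, (∫ y, GFT x.1 x.2 y.1 y.2 ∂(L t)) ∂γhat) - θ * T) := by
  change totalExpected Rev L γhat ≥ -B at hγrev
  change totalExpected Rev L φ ≥ B' at hφrev
  change IsProbabilityMeasure π ∧ totalExpected Rev L π ≥ 0 ∧
    totalExpected GFT L π ≥ totalExpected GFT L γhat - θ * T
  have hθ0 : 0 ≤ θ := hθ ▸ by positivity
  have hθ1 : 0 ≤ 1 - θ := by rw [hθ, sub_nonneg, div_le_one (by linarith)]; linarith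
  have hθB : θ * (B + B') = B := by rw [hθ]; field_simp
  have hRev : totalExpected Rev L π =
      (1 - θ) * totalExpected Rev L γhat + θ * totalExpected Rev L φ :=
    hπ ▸ totalExpected_ofReal_smul_add hθ1 hθ0 (fun _ => integrable_onPairs_Rev _ _ hγsupp)
      (fun _ => integrable_onPairs_Rev _ _ hφsupp)
  have hGFT : totalExpected GFT L π =
      (1 - θ) * totalExpected GFT L γhat + θ * totalExpected GFT L φ :=
    hπ ▸ totalExpected_ofReal_smul_add hθ1 hθ0 (fun t => integrable_onPairs_GFT _ _ (hLsupp t))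
      (fun t => integrable_onPairs_GFT _ _ (hLsupp t))
  have hGFTφ : B' ≤ totalExpected GFT L φ := hφrev.trans (totalExpected_Rev_le_GFT φ hLsupp hφsupp)
  have hGFTγ : totalExpected GFT L γhat ≤ T := totalExpected_GFT_le γhat hLsupp
  refine ⟨hπ ▸ isProbabilityMeasure_ofReal_smul_add hθ1 hθ0 (by ring), ?_, ?_⟩
  · rw [hRev]
    linarith [mul_le_mul_of_nonneg_left hγrev hθ1, mul_le_mul_of_nonneg_left hφrev hθ0]
  · rw [hGFT]
    linarith [mul_le_mul_of_nonneg_left hGFTγ hθ0, mul_nonneg hθ0 (hB'.le.trans hGFTφ)]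
end

section
/- Let T ∈ ℕ, M ≥ 0, R ≥ 0, and let (r_t)_{t=1}^T be reals with |r_t| ≤ 1 and (λ_t)_{t=1}^T reals with λ_t ∈ [0, M]. Let S ⊆ {1,…,T} and τ ∈ {1,…,T}, and assume: (a) Σ_{t∈S, t≤τ} r_t + Σ_{t∉S, t≤τ} r_t ≤ 2; (b) Σ_{t∉S, t≤τ} r_t = Σ_{t∉S} r_t; (c) for every λ ∈ [0, M] and every 1 ≤ t₁ ≤ t₂ ≤ T, Σ_{t∈S, t₁≤t≤t₂} (λ_t − λ)·r_t ≤ R. Then Σ_{t∈S} λ_t·r_t ≤ M·(2 − Σ_{t∉S} r_t) + 2R. -/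
theorem stmt10 (T : ℕ) (M R : ℝ) (hM : 0 ≤ M) (hR : 0 ≤ R)
    (r lam : Fin T → ℝ) (hr : ∀ t, |r t| ≤ 1) (hlam : ∀ t, lam t ∈ Set.Icc (0:ℝ) M)
    (S : Finset (Fin T)) (τ : Fin T)
    (ha : ∑ t ∈ S.filter (· ≤ τ), r t + ∑ t ∈ Sᶜ.filter (· ≤ τ), r t ≤ 2)
    (hb : ∑ t ∈ Sᶜ.filter (· ≤ τ), r t = ∑ t ∈ Sᶜ, r t)
    (hc : ∀ lam0 ∈ Set.Icc (0:ℝ) M, ∀ t₁ t₂ : Fin T, t₁ ≤ t₂ →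
      ∑ t ∈ S.filter (fun t => t₁ ≤ t ∧ t ≤ t₂), (lam t - lam0) * r t ≤ R) :
    ∑ t ∈ S, lam t * r t ≤ M * (2 - ∑ t ∈ Sᶜ, r t) + 2 * R := by
  have hT : 0 < T := τ.pos
  have hsplit : ∑ t ∈ S, lam t * r t
      = ∑ t ∈ S.filter (· ≤ τ), lam t * r t
        + ∑ t ∈ S.filter (fun t => ¬ t ≤ τ), lam t * r t :=
    (Finset.sum_filter_add_sum_filter_not S _ _).symm
  -- first part
  have h1 : ∑ t ∈ S.filter (· ≤ τ), lam t * r t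
      ≤ M * ∑ t ∈ S.filter (· ≤ τ), r t + R := by
    have h := hc M ⟨hM, le_refl M⟩ ⟨0, hT⟩ τ (by simp [Fin.le_def])
    have hfe : S.filter (fun t => (⟨0, hT⟩ : Fin T) ≤ t ∧ t ≤ τ) = S.filter (· ≤ τ) := by
      apply Finset.filter_congr
      intro t ht
      simp only [Fin.le_def]
      omega
    rw [hfe] at h
    have : ∑ t ∈ S.filter (· ≤ τ), (lam t - M) * r t
        = ∑ t ∈ S.filter (· ≤ τ), lam t * r t - M * ∑ t ∈ S.filter (· ≤ τ), r t := by
      rw [Finset.mul_sum, ← Finset.sum_sub_distrib]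
      congr 1; ext t; ring
    linarith [this ▸ h]
  -- second part
  have h2 : ∑ t ∈ S.filter (fun t => ¬ t ≤ τ), lam t * r t ≤ R := by
    by_cases hτ : τ.val + 1 < T
    · have hle : (⟨τ.val + 1, hτ⟩ : Fin T) ≤ ⟨T - 1, Nat.sub_lt hT one_pos⟩ := by
        simp [Fin.le_def]; omega
      have h := hc 0 ⟨le_refl 0, hM⟩ ⟨τ.val + 1, hτ⟩ ⟨T - 1, Nat.sub_lt hT one_pos⟩ hle
      have hfe : S.filter (fun t => (⟨τ.val + 1, hτ⟩ : Fin T) ≤ t ∧ t ≤ ⟨T - 1, Nat.sub_lt hT one_pos⟩)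
          = S.filter (fun t => ¬ t ≤ τ) := by
        apply Finset.filter_congr
        intro t ht
        have := t.isLt
        simp only [Fin.le_def, not_le, Fin.lt_def]
        omega
      rw [hfe] at h
      simpa using h
    · have hfe : S.filter (fun t => ¬ t ≤ τ) = ∅ := by
        apply Finset.filter_false_of_mem
        intro t ht
        have := t.isLt
        simp only [Fin.le_def, not_not]
        omega
      rw [hfe]
      simpa using hR
  -- A ≤ 2 - B
  have hA : ∑ t ∈ S.filter (· ≤ τ), r t ≤ 2 - ∑ t ∈ Sᶜ, r t := by
    rw [← hb]; linarith
  have hMA : M * ∑ t ∈ S.filter (· ≤ τ), r t ≤ M * (2 - ∑ t ∈ Sᶜ, r t) :=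
    mul_le_mul_of_nonneg_left hA hM
  linarith [hsplit]
end

section
/- Let T ∈ ℕ, M ≥ 0, C ≥ 0, and let (a_t)_{t=1}^T be reals with |a_t| ≤ 1, (λ_t)_{t=1}^T reals with λ_t ∈ [0, M], ā ∈ ℝ, and (d_t)_{t=1}^T nonnegative reals such that |a_t − ā| ≤ d_t for every t, Σ_{t=1}^T a_t ≥ 0, and Σ_{t=1}^T d_t ≤ C. Then for every subset S ⊆ {1,…,T}, it holds that −Σ_{t∈S} λ_t·a_t ≤ 2·M·C. -/
theorem stmt11 (T : ℕ) (M C : ℝ) (hM : 0 ≤ M) (hC : 0 ≤ C)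
    (a lam d : Fin T → ℝ) (abar : ℝ)
    (ha : ∀ t, |a t| ≤ 1) (hlam : ∀ t, lam t ∈ Set.Icc (0:ℝ) M)
    (hd : ∀ t, 0 ≤ d t) (hdev : ∀ t, |a t - abar| ≤ d t)
    (hsum : 0 ≤ ∑ t, a t) (hdC : ∑ t, d t ≤ C) :
    ∀ S : Finset (Fin T), -∑ t ∈ S, lam t * a t ≤ 2 * M * C := by
  intro S
  rcases Nat.eq_zero_or_pos T with hT | hT
  · subst hT
    have : S = ∅ := Finset.eq_empty_of_isEmpty S
    subst this
    simp
    positivity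
  · have hT' : (0:ℝ) < T := by exact_mod_cast hT
    have h1 : ∑ t, a t ≤ (T : ℝ) * abar + ∑ t, d t := by
      have : ∑ t, a t ≤ ∑ t : Fin T, (abar + d t) :=
        Finset.sum_le_sum fun t _ => by
          have := (abs_le.mp (hdev t)).2; linarith
      calc ∑ t, a t ≤ ∑ t : Fin T, (abar + d t) := this
        _ = (T : ℝ) * abar + ∑ t, d t := by
          rw [Finset.sum_add_distrib, Finset.sum_const, Finset.card_univ,
            Fintype.card_fin, nsmul_eq_mul]
    have habar : -(C / T) ≤ abar := by
      rw [neg_le, le_div_iff₀ hT']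
      nlinarith [h1, hdC, hsum]
    have hlow : ∀ t, -(C / T) - d t ≤ a t := fun t => by
      have := (abs_le.mp (hdev t)).1
      linarith
    have hCT : 0 ≤ C / T := by positivity
    have key : ∀ t ∈ S, -(lam t * a t) ≤ M * (C / T + d t) := by
      intro t _
      have hl := hlam t
      have h2 : lam t * (-(a t)) ≤ lam t * (C / T + d t) := by
        apply mul_le_mul_of_nonneg_left _ hl.1
        have := hlow t; linarith
      have h3 : lam t * (C / T + d t) ≤ M * (C / T + d t) := by
        apply mul_le_mul_of_nonneg_right hl.2
        have := hd t; linarith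
      linarith [h2, h3]
    have hsum2 : -∑ t ∈ S, lam t * a t ≤ ∑ t ∈ S, M * (C / T + d t) := by
      rw [← Finset.sum_neg_distrib]
      exact Finset.sum_le_sum key
    have heq : ∑ t ∈ S, M * (C / T + d t)
        = M * ((S.card : ℝ) * (C / T) + ∑ t ∈ S, d t) := by
      rw [← Finset.mul_sum, Finset.sum_add_distrib, Finset.sum_const, nsmul_eq_mul]
    have hcard : (S.card : ℝ) ≤ T := by
      exact_mod_cast (le_trans S.card_le_univ (le_of_eq (by simp)))
    have hds : ∑ t ∈ S, d t ≤ C := by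
      refine le_trans (Finset.sum_le_sum_of_subset_of_nonneg S.subset_univ
        (fun t _ _ => hd t)) hdC
    have hcardC : (S.card : ℝ) * (C / T) ≤ C := by
      calc (S.card : ℝ) * (C / T) ≤ (T : ℝ) * (C / T) :=
            mul_le_mul_of_nonneg_right hcard hCT
        _ = C := by field_simp
    have : M * ((S.card : ℝ) * (C / T) + ∑ t ∈ S, d t) ≤ M * (C + C) := by
      apply mul_le_mul_of_nonneg_left _ hM
      linarith
    calc -∑ t ∈ S, lam t * a t ≤ ∑ t ∈ S, M * (C / T + d t) := hsum2
      _ = M * ((S.card : ℝ) * (C / T) + ∑ t ∈ S, d t) := heq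
      _ ≤ M * (C + C) := this
      _ = 2 * M * C := by ring
end

section
/- Let A ⊆ [0,1]² be a finite nonempty set with projections A_s := {p : (p,q) ∈ A} and A_b := {q : (p,q) ∈ A}, let π : A → ℝ with π > 0 and Σ_A π = 1, let α ∈ (0,1), γ ≥ 0, λ ≥ 0, s, b, u, v ∈ [0,1], h ∈ {0,1,2}, and (p̂,q̂) ∈ A. Define D_b(q) := (α/2)·Σ_{p':(p',q)∈A} π(p',q), D_s(p) := (α/2)·Σ_{q':(p,q')∈A} π(p,q'), and D₀(p,q) := (1−α)·π(p,q). Define for (p,q) ∈ A: L̃(p,q) := 𝟙[h=1 and q=q̂]·(1 − 𝟙[s ≤ u ≤ p and b ≥ q])/(D_b(q)+γ); R̃(p,q) := 𝟙[h=2 and p=p̂]·(1 − 𝟙[s ≤ p and q ≤ v ≤ b])/(D_s(p)+γ); Reṽ(p,q) := 𝟙[h=0 and (p,q)=(p̂,q̂)]·(1 − (q−p)·𝟙[s ≤ p and b ≥ q])/(D₀(p,q)+γ); and ℓ̃(p,q) := L̃(p,q) + R̃(p,q) + (λ+1)·Reṽ(p,q). Also define L̃⁰(q) := 𝟙[h=1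 and q=q̂]/(D_b(q)+γ) and R̃⁰(p) := 𝟙[h=2 and p=p̂]/(D_s(p)+γ). Then the weighted second moment satisfies Σ_{(p,q)∈A} π(p,q)·ℓ̃(p,q)² ≤ (6/α)·Σ_{q∈A_b} L̃⁰(q) + (6/α)·Σ_{p∈A_s} R̃⁰(p) + (3·(λ+1)²/(1−α))·Σ_{(p,q)∈A} Reṽ(p,q). -/
/-- Buyer-side marginal denominator `D_b(q) = (α/2)·Σ_{p':(p',q)∈A} π(p',q)`. -/
noncomputable def Db (A : Finset (ℝ × ℝ)) (π : ℝ × ℝ → ℝ) (α q : ℝ) : ℝ :=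
  α / 2 * ∑ x ∈ A.filter (fun x => x.2 = q), π x

/-- Seller-side marginal denominator `D_s(p) = (α/2)·Σ_{q':(p,q')∈A} π(p,q')`. -/
noncomputable def Ds (A : Finset (ℝ × ℝ)) (π : ℝ × ℝ → ℝ) (α p : ℝ) : ℝ :=
  α / 2 * ∑ x ∈ A.filter (fun x => x.1 = p), π x

/-- Bandit denominator `D₀(p,q) = (1-α)·π(p,q)`. -/
noncomputable def D0 (π : ℝ × ℝ → ℝ) (α : ℝ) (x : ℝ × ℝ) : ℝ := (1 - α) * π x

/-- IX seller-term estimator `L̃(p,q)`. -/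
noncomputable def Ltil (A : Finset (ℝ × ℝ)) (π : ℝ × ℝ → ℝ) (α γ s b u qhat : ℝ)
    (h : Fin 3) (x : ℝ × ℝ) : ℝ :=
  (if h = 1 ∧ x.2 = qhat then (1:ℝ) else 0) *
    (1 - (if s ≤ u ∧ u ≤ x.1 ∧ x.2 ≤ b then (1:ℝ) else 0)) / (Db A π α x.2 + γ)

/-- IX buyer-term estimator `R̃(p,q)`. -/
noncomputable def Rtil (A : Finset (ℝ × ℝ)) (π : ℝ × ℝ → ℝ) (α γ s b v phat : ℝ)
    (h : Fin 3) (x : ℝ × ℝ) : ℝ :=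
  (if h = 2 ∧ x.1 = phat then (1:ℝ) else 0) *
    (1 - (if s ≤ x.1 ∧ x.2 ≤ v ∧ v ≤ b then (1:ℝ) else 0)) / (Ds A π α x.1 + γ)

/-- IX revenue-term estimator `Reṽ(p,q)`. -/
noncomputable def Revtil (π : ℝ × ℝ → ℝ) (α γ s b phat qhat : ℝ)
    (h : Fin 3) (x : ℝ × ℝ) : ℝ :=
  (if h = 0 ∧ x = (phat, qhat) then (1:ℝ) else 0) *
    (1 - (x.2 - x.1) * (if s ≤ x.1 ∧ x.2 ≤ b then (1:ℝ) else 0)) / (D0 π α x + γ)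

/-- IX loss estimator `ℓ̃ = L̃ + R̃ + (λ+1)·Reṽ`. -/
noncomputable def ellTil (A : Finset (ℝ × ℝ)) (π : ℝ × ℝ → ℝ) (α γ lam s b u v phat qhat : ℝ)
    (h : Fin 3) (x : ℝ × ℝ) : ℝ :=
  Ltil A π α γ s b u qhat h x + Rtil A π α γ s b v phat h x
    + (lam + 1) * Revtil π α γ s b phat qhat h x

/-- `L̃⁰(q) = 𝟙[h=1 ∧ q=q̂]/(D_b(q)+γ)`. -/
noncomputable def Ltil0 (A : Finset (ℝ × ℝ)) (π : ℝ × ℝ → ℝ) (α γ qhat : ℝ)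
    (h : Fin 3) (q : ℝ) : ℝ :=
  (if h = 1 ∧ q = qhat then (1:ℝ) else 0) / (Db A π α q + γ)

/-- `R̃⁰(p) = 𝟙[h=2 ∧ p=p̂]/(D_s(p)+γ)`. -/
noncomputable def Rtil0 (A : Finset (ℝ × ℝ)) (π : ℝ × ℝ → ℝ) (α γ phat : ℝ)
    (h : Fin 3) (p : ℝ) : ℝ :=
  (if h = 2 ∧ p = phat then (1:ℝ) else 0) / (Ds A π α p + γ)


lemma Db_pos' (A : Finset (ℝ × ℝ)) (π : ℝ × ℝ → ℝ) {α : ℝ}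
    (hπpos : ∀ x ∈ A, 0 < π x) (hα : 0 < α) {x : ℝ × ℝ} (hx : x ∈ A) :
    0 < Db A π α x.2 := by
  apply mul_pos (by linarith)
  exact Finset.sum_pos (fun y hy => hπpos y (Finset.mem_filter.mp hy).1)
    ⟨x, Finset.mem_filter.mpr ⟨hx, rfl⟩⟩

lemma Ds_pos' (A : Finset (ℝ × ℝ)) (π : ℝ × ℝ → ℝ) {α : ℝ}
    (hπpos : ∀ x ∈ A, 0 < π x) (hα : 0 < α) {x : ℝ × ℝ} (hx : x ∈ A) :
    0 < Ds A π α x.1 := by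
  apply mul_pos (by linarith)
  exact Finset.sum_pos (fun y hy => hπpos y (Finset.mem_filter.mp hy).1)
    ⟨x, Finset.mem_filter.mpr ⟨hx, rfl⟩⟩

lemma indfrac_nonneg (P Q : Prop) [Decidable P] [Decidable Q] {d : ℝ} (hd : 0 < d) :
    0 ≤ (if P then (1:ℝ) else 0) * (1 - if Q then (1:ℝ) else 0) / d := by
  split_ifs <;> norm_num <;> positivity

lemma indfrac_le (P Q : Prop) [Decidable P] [Decidable Q] {d : ℝ} (hd : 0 < d) :
    (if P then (1:ℝ) else 0) * (1 - if Q then (1:ℝ) else 0) / d ≤ 1 / d := by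
  split_ifs <;> norm_num <;> positivity

theorem stmt15 (A : Finset (ℝ × ℝ)) (hA : A.Nonempty)
    (hAsub : ∀ x ∈ A, x ∈ Set.Icc (0:ℝ) 1 ×ˢ Set.Icc (0:ℝ) 1)
    (π : ℝ × ℝ → ℝ) (hπpos : ∀ x ∈ A, 0 < π x) (hπsum : ∑ x ∈ A, π x = 1)
    (α : ℝ) (hα : α ∈ Set.Ioo (0:ℝ) 1) (γ : ℝ) (hγ : 0 ≤ γ) (lam : ℝ) (hlam : 0 ≤ lam)
    (s b u v : ℝ) (hs : s ∈ Set.Icc (0:ℝ) 1) (hb : b ∈ Set.Icc (0:ℝ) 1)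
    (hu : u ∈ Set.Icc (0:ℝ) 1) (hv : v ∈ Set.Icc (0:ℝ) 1)
    (h : Fin 3) (phat qhat : ℝ) (hpq : (phat, qhat) ∈ A) :
    ∑ x ∈ A, π x * (ellTil A π α γ lam s b u v phat qhat h x) ^ 2
      ≤ (6 / α) * ∑ q ∈ A.image Prod.snd, Ltil0 A π α γ qhat h q
        + (6 / α) * ∑ p ∈ A.image Prod.fst, Rtil0 A π α γ phat h p
        + (3 * (lam + 1) ^ 2 / (1 - α)) * ∑ x ∈ A, Revtil π α γ s b phat qhat h x := by
  obtain ⟨hα0, hα1⟩ := hα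
  have h1α : (0:ℝ) < 1 - α := by linarith
  have hαne : α ≠ 0 := ne_of_gt hα0
  have hcases : h = 0 ∨ h = 1 ∨ h = 2 := by fin_cases h <;> simp
  rcases hcases with rfl | rfl | rfl
  · -- h = 0 : only the revenue term is active
    have hL0 : ∑ q ∈ A.image Prod.snd, Ltil0 A π α γ qhat 0 q = 0 :=
      Finset.sum_eq_zero fun q _ => by simp [Ltil0]
    have hR0 : ∑ p ∈ A.image Prod.fst, Rtil0 A π α γ phat 0 p = 0 :=
      Finset.sum_eq_zero fun p _ => by simp [Rtil0]
    rw [hL0, hR0, mul_zero, zero_add, zero_add, Finset.mul_sum]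
    apply Finset.sum_le_sum
    intro x hx
    have hell : ellTil A π α γ lam s b u v phat qhat 0 x
        = (lam + 1) * Revtil π α γ s b phat qhat 0 x := by
      simp [ellTil, Ltil, Rtil]
    rw [hell]
    by_cases hx' : x = (phat, qhat)
    · subst hx'
      have hP : 0 < π (phat, qhat) := hπpos _ hpq
      obtain ⟨⟨hp0, hp1⟩, hq0, hq1⟩ := hAsub _ hpq
      have hDpos : 0 < D0 π α (phat, qhat) + γ := by
        have : 0 < (1 - α) * π (phat, qhat) := mul_pos h1α hP
        simp only [D0]; linarith
      have hRev : Revtil π α γ s b phat qhat 0 (phat, qhat)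
          = (1 - (qhat - phat) * (if s ≤ phat ∧ qhat ≤ b then (1:ℝ) else 0))
              / (D0 π α (phat, qhat) + γ) := by
        simp [Revtil]
      set N : ℝ := 1 - (qhat - phat) * (if s ≤ phat ∧ qhat ≤ b then (1:ℝ) else 0) with hNdef
      have hN0 : 0 ≤ N := by rw [hNdef]; split_ifs <;> nlinarith
      have hN2 : N ≤ 2 := by rw [hNdef]; split_ifs <;> nlinarith
      set Dγ : ℝ := D0 π α (phat, qhat) + γ with hDγdef
      have hDT : (1 - α) * π (phat, qhat) ≤ Dγ := by simp only [hDγdef, D0]; linarith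
      have hT : 0 < Dγ⁻¹ := inv_pos.mpr hDpos
      have hDT1 : Dγ * Dγ⁻¹ = 1 := mul_inv_cancel₀ (ne_of_gt hDpos)
      rw [hRev, div_eq_mul_inv, div_mul_eq_mul_div, le_div_iff₀ h1α]
      calc π (phat, qhat) * ((lam + 1) * (N * Dγ⁻¹)) ^ 2 * (1 - α)
          = ((1 - α) * π (phat, qhat) * Dγ⁻¹) * ((lam + 1) ^ 2 * (N ^ 2 * Dγ⁻¹)) := by
            ring
        _ ≤ 1 * ((lam + 1) ^ 2 * (N ^ 2 * Dγ⁻¹)) := by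
            apply mul_le_mul_of_nonneg_right _
              (mul_nonneg (sq_nonneg _) (mul_nonneg (sq_nonneg _) hT.le))
            calc (1 - α) * π (phat, qhat) * Dγ⁻¹
                ≤ Dγ * Dγ⁻¹ := mul_le_mul_of_nonneg_right hDT hT.le
              _ = 1 := hDT1
        _ = (lam + 1) ^ 2 * N ^ 2 * Dγ⁻¹ := by ring
        _ ≤ (lam + 1) ^ 2 * (3 * N) * Dγ⁻¹ := by
            apply mul_le_mul_of_nonneg_right _ hT.le
            apply mul_le_mul_of_nonneg_left _ (sq_nonneg _)
            nlinarith
        _ = 3 * (lam + 1) ^ 2 * (N * Dγ⁻¹) := by ring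
    · have hz : Revtil π α γ s b phat qhat 0 x = 0 := by simp [Revtil, hx']
      simp [hz]
  · -- h = 1 : only the seller-probe term is active
    have hR0 : ∑ p ∈ A.image Prod.fst, Rtil0 A π α γ phat 1 p = 0 :=
      Finset.sum_eq_zero fun p _ => by simp [Rtil0]
    have hRev0 : ∑ x ∈ A, Revtil π α γ s b phat qhat 1 x = 0 :=
      Finset.sum_eq_zero fun x _ => by simp [Revtil]
    rw [hR0, hRev0, mul_zero, mul_zero, add_zero, add_zero]
    set D := Db A π α qhat with hDdef
    have hDpos : 0 < D := by rw [hDdef]; exact Db_pos' A π hπpos hα0 hpq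
    have hDγ : 0 < D + γ := by linarith
    have hq_mem : qhat ∈ A.image Prod.snd := Finset.mem_image.mpr ⟨(phat, qhat), hpq, rfl⟩
    have hnonneg : ∀ q ∈ A.image Prod.snd, 0 ≤ Ltil0 A π α γ qhat 1 q := by
      intro q hq
      obtain ⟨x, hxA, hxq⟩ := Finset.mem_image.mp hq
      have hpos : 0 < Db A π α q + γ := by
        have := Db_pos' A π hπpos hα0 hxA
        rw [hxq] at this; linarith
      simp only [Ltil0]
      apply div_nonneg _ hpos.le
      split_ifs <;> norm_num
    have hSnn : 0 ≤ ∑ q ∈ A.image Prod.snd, Ltil0 A π α γ qhat 1 q :=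
      Finset.sum_nonneg hnonneg
    have hL0qhat : Ltil0 A π α γ qhat 1 qhat = 1 / (D + γ) := by
      simp [Ltil0, hDdef]
    have hSge : 1 / (D + γ) ≤ ∑ q ∈ A.image Prod.snd, Ltil0 A π α γ qhat 1 q := by
      rw [← hL0qhat]
      exact Finset.single_le_sum hnonneg hq_mem
    have step1 : ∑ x ∈ A, π x * (ellTil A π α γ lam s b u v phat qhat 1 x) ^ 2
        ≤ ∑ x ∈ A, (if x.2 = qhat then π x * (1 / (D + γ)) ^ 2 else 0) := by
      apply Finset.sum_le_sum
      intro x hx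
      have hell : ellTil A π α γ lam s b u v phat qhat 1 x
          = Ltil A π α γ s b u qhat 1 x := by simp [ellTil, Rtil, Revtil]
      rw [hell]
      have hdd : 0 < Db A π α x.2 + γ := by
        have := Db_pos' A π hπpos hα0 hx; linarith
      by_cases hq : x.2 = qhat
      · rw [if_pos hq]
        have h0 : 0 ≤ Ltil A π α γ s b u qhat 1 x := indfrac_nonneg _ _ hdd
        have h1 : Ltil A π α γ s b u qhat 1 x ≤ 1 / (D + γ) := by
          have := indfrac_le ((1:Fin 3) = 1 ∧ x.2 = qhat) (s ≤ u ∧ u ≤ x.1 ∧ x.2 ≤ b) hdd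
          calc Ltil A π α γ s b u qhat 1 x ≤ 1 / (Db A π α x.2 + γ) := this
            _ = 1 / (D + γ) := by rw [hq, ← hDdef]
        exact mul_le_mul_of_nonneg_left (pow_le_pow_left₀ h0 h1 2) (hπpos x hx).le
      · rw [if_neg hq]
        have hz : Ltil A π α γ s b u qhat 1 x = 0 := by
          simp only [Ltil]
          rw [if_neg (by simp [hq]), zero_mul, zero_div]
        simp [hz]
    have step2 : ∑ x ∈ A, (if x.2 = qhat then π x * (1 / (D + γ)) ^ 2 else 0)
        = (∑ x ∈ A.filter (fun x => x.2 = qhat), π x) * (1 / (D + γ)) ^ 2 := by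
      rw [← Finset.sum_filter, ← Finset.sum_mul]
    have hSf : ∑ x ∈ A.filter (fun x => x.2 = qhat), π x = 2 / α * D := by
      rw [hDdef, Db]; field_simp
    have step3 : (2 / α * D) * (1 / (D + γ)) ^ 2 ≤ (2 / α) * (1 / (D + γ)) := by
      have hDT : D * (1 / (D + γ)) ^ 2 ≤ 1 / (D + γ) := by
        rw [div_pow, one_pow, mul_div_assoc', mul_one, div_le_div_iff₀ (by positivity) hDγ]
        nlinarith
      calc (2 / α * D) * (1 / (D + γ)) ^ 2 = (2 / α) * (D * (1 / (D + γ)) ^ 2) := by ring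
        _ ≤ (2 / α) * (1 / (D + γ)) := by
            apply mul_le_mul_of_nonneg_left hDT (by positivity)
    calc ∑ x ∈ A, π x * (ellTil A π α γ lam s b u v phat qhat 1 x) ^ 2
        ≤ (2 / α * D) * (1 / (D + γ)) ^ 2 := by rw [← hSf, ← step2]; exact step1
      _ ≤ (2 / α) * (1 / (D + γ)) := step3
      _ ≤ (2 / α) * ∑ q ∈ A.image Prod.snd, Ltil0 A π α γ qhat 1 q :=
          mul_le_mul_of_nonneg_left hSge (by positivity)
      _ ≤ (6 / α) * ∑ q ∈ A.image Prod.snd, Ltil0 A π α γ qhat 1 q := by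
          apply mul_le_mul_of_nonneg_right _ hSnn
          gcongr
          norm_num
  · -- h = 2 : only the buyer-probe term is active
    have hL0 : ∑ q ∈ A.image Prod.snd, Ltil0 A π α γ qhat 2 q = 0 :=
      Finset.sum_eq_zero fun q _ => by simp [Ltil0]
    have hRev0 : ∑ x ∈ A, Revtil π α γ s b phat qhat 2 x = 0 :=
      Finset.sum_eq_zero fun x _ => by simp [Revtil]
    rw [hL0, hRev0, mul_zero, mul_zero, add_zero, zero_add]
    set D := Ds A π α phat with hDdef
    have hDpos : 0 < D := by rw [hDdef]; exact Ds_pos' A π hπpos hα0 hpq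
    have hDγ : 0 < D + γ := by linarith
    have hp_mem : phat ∈ A.image Prod.fst := Finset.mem_image.mpr ⟨(phat, qhat), hpq, rfl⟩
    have hnonneg : ∀ p ∈ A.image Prod.fst, 0 ≤ Rtil0 A π α γ phat 2 p := by
      intro p hp
      obtain ⟨x, hxA, hxp⟩ := Finset.mem_image.mp hp
      have hpos : 0 < Ds A π α p + γ := by
        have := Ds_pos' A π hπpos hα0 hxA
        rw [hxp] at this; linarith
      simp only [Rtil0]
      apply div_nonneg _ hpos.le
      split_ifs <;> norm_num
    have hSnn : 0 ≤ ∑ p ∈ A.image Prod.fst, Rtil0 A π α γ phat 2 p :=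
      Finset.sum_nonneg hnonneg
    have hR0phat : Rtil0 A π α γ phat 2 phat = 1 / (D + γ) := by
      simp [Rtil0, hDdef]
    have hSge : 1 / (D + γ) ≤ ∑ p ∈ A.image Prod.fst, Rtil0 A π α γ phat 2 p := by
      rw [← hR0phat]
      exact Finset.single_le_sum hnonneg hp_mem
    have step1 : ∑ x ∈ A, π x * (ellTil A π α γ lam s b u v phat qhat 2 x) ^ 2
        ≤ ∑ x ∈ A, (if x.1 = phat then π x * (1 / (D + γ)) ^ 2 else 0) := by
      apply Finset.sum_le_sum
      intro x hx
      have hell : ellTil A π α γ lam s b u v phat qhat 2 x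
          = Rtil A π α γ s b v phat 2 x := by simp [ellTil, Ltil, Revtil]
      rw [hell]
      have hdd : 0 < Ds A π α x.1 + γ := by
        have := Ds_pos' A π hπpos hα0 hx; linarith
      by_cases hp : x.1 = phat
      · rw [if_pos hp]
        have h0 : 0 ≤ Rtil A π α γ s b v phat 2 x := indfrac_nonneg _ _ hdd
        have h1 : Rtil A π α γ s b v phat 2 x ≤ 1 / (D + γ) := by
          have := indfrac_le ((2:Fin 3) = 2 ∧ x.1 = phat) (s ≤ x.1 ∧ x.2 ≤ v ∧ v ≤ b) hdd
          calc Rtil A π α γ s b v phat 2 x ≤ 1 / (Ds A π α x.1 + γ) := this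
            _ = 1 / (D + γ) := by rw [hp, ← hDdef]
        exact mul_le_mul_of_nonneg_left (pow_le_pow_left₀ h0 h1 2) (hπpos x hx).le
      · rw [if_neg hp]
        have hz : Rtil A π α γ s b v phat 2 x = 0 := by
          simp only [Rtil]
          rw [if_neg (by simp [hp]), zero_mul, zero_div]
        simp [hz]
    have step2 : ∑ x ∈ A, (if x.1 = phat then π x * (1 / (D + γ)) ^ 2 else 0)
        = (∑ x ∈ A.filter (fun x => x.1 = phat), π x) * (1 / (D + γ)) ^ 2 := by
      rw [← Finset.sum_filter, ← Finset.sum_mul]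
    have hSf : ∑ x ∈ A.filter (fun x => x.1 = phat), π x = 2 / α * D := by
      rw [hDdef, Ds]; field_simp
    have step3 : (2 / α * D) * (1 / (D + γ)) ^ 2 ≤ (2 / α) * (1 / (D + γ)) := by
      have hDT : D * (1 / (D + γ)) ^ 2 ≤ 1 / (D + γ) := by
        rw [div_pow, one_pow, mul_div_assoc', mul_one, div_le_div_iff₀ (by positivity) hDγ]
        nlinarith
      calc (2 / α * D) * (1 / (D + γ)) ^ 2 = (2 / α) * (D * (1 / (D + γ)) ^ 2) := by ring
        _ ≤ (2 / α) * (1 / (D + γ)) := by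
            apply mul_le_mul_of_nonneg_left hDT (by positivity)
    calc ∑ x ∈ A, π x * (ellTil A π α γ lam s b u v phat qhat 2 x) ^ 2
        ≤ (2 / α * D) * (1 / (D + γ)) ^ 2 := by rw [← hSf, ← step2]; exact step1
      _ ≤ (2 / α) * (1 / (D + γ)) := step3
      _ ≤ (2 / α) * ∑ p ∈ A.image Prod.fst, Rtil0 A π α γ phat 2 p :=
          mul_le_mul_of_nonneg_left hSge (by positivity)
      _ ≤ (6 / α) * ∑ p ∈ A.image Prod.fst, Rtil0 A π α γ phat 2 p := by
          apply mul_le_mul_of_nonneg_right _ hSnn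
          gcongr
          norm_num
end
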